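/- arXiv:2402.08368 — 9 statements merged into one kernel-verified Lean document; each statement's English description precedes it below -/
import Mathlib

section
/- Let α, β, γ, c, A be real numbers with α > 0 and γ ≠ 0. If (β+c)² + 2Aγ < 0, then the vector field f(φ,ψ) := (ψ, (−A + (β+c)φ + (γ/2)φ²)/α) has no zeros (so the system (★) has no stationary points), and every solution (φ, ψ) of (★) defined on all of ℝ is unbounded (i.e., the curve y ↦ (φ(y), ψ(y)) is not contained in any bounded subset of ℝ²). -/
/-!
Completing the square gives `2γ Q(x) = (γx + (β+c))² - D` for the quadratic
`Q(x) = -A + (β+c)x + (γ/2)x²` and `D = (β+c)² + 2Aγ < 0`, so `γ Q` is bounded below by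
`-D/2 > 0`. Hence `Q` has no zeros, and along a solution `(γψ)' = γ Q(φ)/α ≥ -D/(2α) > 0`,
so `γψ` grows at least linearly and cannot stay bounded.
-/

open Set Filter Bornology

theorem neg_discrim_div_two_le_mul_quadratic (A b γ x : ℝ) :
    -(b ^ 2 + 2 * A * γ) / 2 ≤ γ * (-A + b * x + γ / 2 * x ^ 2) := by
  nlinarith [sq_nonneg (γ * x + b)]

theorem tendsto_atTop_of_pos_le_deriv {g g' : ℝ → ℝ} {κ : ℝ} (hκ : 0 < κ)
    (hg : ∀ y, HasDerivAt g (g' y) y) (hle : ∀ y, κ ≤ g' y) : Tendsto g atTop atTop := by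
  have hgrowth : ∀ y, 0 ≤ y → g 0 + κ * y ≤ g y := fun y hy => by
    have := mul_sub_le_image_sub_of_le_deriv (fun x => (hg x).differentiableAt)
      (fun x => (hg x).deriv ▸ hle x) hy
    linarith
  refine tendsto_atTop_mono' atTop ?_
    (tendsto_atTop_add_const_left atTop (g 0) (tendsto_id.const_mul_atTop hκ))
  filter_upwards [eventually_ge_atTop 0] with y hy using hgrowth y hy

theorem stmt_3_general (α β γ c A : ℝ) (hα : 0 < α)
    (hD : (β + c) ^ 2 + 2 * A * γ < 0)
    (f : ℝ × ℝ → ℝ × ℝ)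
    (hf : ∀ p : ℝ × ℝ, f p = (p.2, (-A + (β + c) * p.1 + γ / 2 * p.1 ^ 2) / α)) :
    (∀ p : ℝ × ℝ, f p ≠ 0) ∧
    (∀ φ ψ : ℝ → ℝ,
      (∀ y : ℝ, HasDerivAt φ (ψ y) y) →
      (∀ y : ℝ, HasDerivAt ψ ((-A + (β + c) * φ y + γ / 2 * (φ y) ^ 2) / α) y) →
      ¬ Bornology.IsBounded (Set.range fun y : ℝ => (φ y, ψ y))) := by
  have hm : 0 < -((β + c) ^ 2 + 2 * A * γ) / 2 := by linarith
  have hQ := neg_discrim_div_two_le_mul_quadratic A (β + c) γ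
  refine ⟨fun p hp => ?_, fun φ ψ _ hψ hb => ?_⟩
  · have hQp : (-A + (β + c) * p.1 + γ / 2 * p.1 ^ 2) / α = 0 := by
      simpa [hf p] using congrArg Prod.snd hp
    rw [div_eq_zero_iff, or_iff_left hα.ne'] at hQp
    have := hQ p.1
    rw [hQp, mul_zero] at this
    linarith
  · have hψ_bdd : IsBounded (range ψ) := by
      have := hb.image_snd; rwa [← range_comp] at this
    have hγψ_bdd : IsBounded (range fun y => γ * ψ y) := by
      simpa only [smul_set_range, smul_eq_mul] using hψ_bdd.smul₀ γ
    have hγψ_top : Tendsto (fun y => γ * ψ y) atTop atTop :=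
      tendsto_atTop_of_pos_le_deriv (div_pos hm hα) (fun y => (hψ y).const_mul γ)
        fun y => by rw [mul_div_assoc']; gcongr; exact hQ (φ y)
    exact not_bddAbove_of_tendsto_atTop hγψ_top hγψ_bdd.bddAbove

/-- If `(β+c)² + 2Aγ < 0` then the vector field
`f(φ,ψ) = (ψ, (−A + (β+c)φ + (γ/2)φ²)/α)` has no zeros (no stationary points of (★)),
and every global solution of (★) is unbounded. -/
theorem stmt_3 (α β γ c A : ℝ) (hα : 0 < α) (hγ : γ ≠ 0)
    (hD : (β + c) ^ 2 + 2 * A * γ < 0)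
    (f : ℝ × ℝ → ℝ × ℝ)
    (hf : ∀ p : ℝ × ℝ, f p = (p.2, (-A + (β + c) * p.1 + γ / 2 * p.1 ^ 2) / α)) :
    (∀ p : ℝ × ℝ, f p ≠ 0) ∧
    (∀ φ ψ : ℝ → ℝ,
      (∀ y : ℝ, HasDerivAt φ (ψ y) y) →
      (∀ y : ℝ, HasDerivAt ψ ((-A + (β + c) * φ y + γ / 2 * (φ y) ^ 2) / α) y) →
      ¬ Bornology.IsBounded (Set.range fun y : ℝ => (φ y, ψ y))) :=
  stmt_3_general α β γ c A hα hD f hf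
end

section
/- Let α, β, γ, c, A be real numbers with α > 0 and γ ≠ 0, and suppose D := (β+c)² + 2Aγ > 0. Set φ₊ := (−(β+c) + √D)/γ. Then there exists a nonconstant solution (φ, ψ) : ℝ → ℝ² of the system (★) such that lim_{y→+∞} φ(y) = lim_{y→−∞} φ(y) = φ₊ and lim_{y→+∞} ψ(y) = lim_{y→−∞} ψ(y) = 0. Moreover, this solution is unique up to translation: if (φ₁, ψ₁) and (φ₂, ψ₂) are two nonconstant solutions of (★) on ℝ with these limits at ±∞, then there exists y₁ ∈ ℝ such that (φ₂(y), ψ₂(y)) = (φ₁(y + y₁), ψ₁(y + y₁)) for all y ∈ ℝ. -/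
/-!
Write `F` for the force `-A + (β+c) x + (γ/2) x²` and `W` for its primitive, so that (★) reads
`φ' = ψ`, `α ψ' = F φ`, and let `s = F'(φ₊) = √D`. The energy `α ψ²/2 - W φ` is conserved, and
along a solution converging to `(φ₊, 0)` it equals `-W φ₊`. Since `φ` has the same limit at
`±∞`, `ψ = φ'` vanishes somewhere, and there `W φ = W φ₊`. As
`W (φ₊ + h) - W φ₊ = h² (s/2 + γ h/6)`, and `φ = φ₊` at a zero of `ψ` would make the orbit the
equilibrium itself, every homoclinic solution passes through the turning point
`(φ₊ - 3s/γ, 0)`. The vector field is smooth, so two such solutions are translates of each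
other. Existence is the explicit solitary wave `φ₊ - (3s/γ) sech² (k y)` with `4 α k² = s`.
-/

/-- A nonconstant solution of the first-order system (★)
`φ' = ψ`, `ψ' = (−A + (β+c)φ + (γ/2)φ²)/α` on `ℝ` which converges to the
stationary point `(φ₊, 0)` at both `±∞` (a homoclinic solution). -/
def IsHomoclinicSol (α β γ c A φp : ℝ) (φ ψ : ℝ → ℝ) : Prop :=
  (∀ y : ℝ, HasDerivAt φ (ψ y) y) ∧
  (∀ y : ℝ, HasDerivAt ψ ((-A + (β + c) * φ y + γ / 2 * (φ y) ^ 2) / α) y) ∧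
  (¬ ∀ y z : ℝ, (φ y, ψ y) = (φ z, ψ z)) ∧
  Filter.Tendsto φ Filter.atTop (nhds φp) ∧
  Filter.Tendsto φ Filter.atBot (nhds φp) ∧
  Filter.Tendsto ψ Filter.atTop (nhds 0) ∧
  Filter.Tendsto ψ Filter.atBot (nhds 0)

open Filter Topology Set Real

theorem ODE_solution_unique_of_locallyLipschitz {E : Type*} [NormedAddCommGroup E]
    [NormedSpace ℝ E] {v : E → E} (hv : LocallyLipschitz v) {f g : ℝ → E}
    (hf : ∀ t, HasDerivAt f (v (f t)) t) (hg : ∀ t, HasDerivAt g (v (g t)) t)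
    {t₀ : ℝ} (heq : f t₀ = g t₀) : f = g := by
  have hfc : Continuous f := continuous_iff_continuousAt.2 fun t => (hf t).continuousAt
  have hgc : Continuous g := continuous_iff_continuousAt.2 fun t => (hg t).continuousAt
  have hopen : IsOpen {t | f t = g t} := by
    refine isOpen_iff_mem_nhds.2 fun t (ht : f t = g t) => ?_
    obtain ⟨K, U, hU, hK⟩ := hv (f t)
    have hfU : ∀ᶠ t' in 𝓝 t, f t' ∈ U := hfc.continuousAt hU
    have hgU : ∀ᶠ t' in 𝓝 t, g t' ∈ U := hgc.continuousAt (ht ▸ hU)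
    exact ODE_solution_unique_of_eventually (v := fun _ => v) (s := fun _ => U)
      (.of_forall fun _ => hK) (hfU.mono fun t' h => ⟨hf t', h⟩)
      (hgU.mono fun t' h => ⟨hg t', h⟩) ht
  have hall := IsClopen.eq_univ ⟨isClosed_eq hfc hgc, hopen⟩ ⟨t₀, heq⟩
  exact funext fun t => (hall.symm ▸ mem_univ t : t ∈ {t | f t = g t})

theorem exists_hasDerivAt_eq_zero_of_tendsto_atBot_atTop {f f' : ℝ → ℝ} {l : ℝ}
    (hf : ∀ x, HasDerivAt f (f' x) x) (hbot : Tendsto f atBot (𝓝 l))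
    (htop : Tendsto f atTop (𝓝 l)) : ∃ x, f' x = 0 := by
  by_contra! h
  rcases hasDerivWithinAt_forall_lt_or_forall_gt_of_forall_ne convex_univ
    (fun x _ => (hf x).hasDerivWithinAt) (fun x _ => h x) with hneg | hpos
  · have hf : StrictAnti f := strictAnti_of_deriv_neg fun x => (hf x).deriv ▸ hneg x trivial
    exact lt_irrefl l (((hf.antitone.le_of_tendsto htop 1).trans_lt (hf zero_lt_one)).trans_le
      (hf.antitone.ge_of_tendsto hbot 0))
  · have hf : StrictMono f := strictMono_of_deriv_pos fun x => (hf x).deriv ▸ hpos x trivial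
    exact lt_irrefl l (((hf.monotone.le_of_tendsto hbot 0).trans_lt (hf zero_lt_one)).trans_le
      (hf.monotone.ge_of_tendsto htop 1))

theorem energy_eq_of_tendsto_atTop {W F φ ψ : ℝ → ℝ} {α p : ℝ} (hα : α ≠ 0)
    (hW : ∀ x, HasDerivAt W (F x) x) (hφ : ∀ y, HasDerivAt φ (ψ y) y)
    (hψ : ∀ y, HasDerivAt ψ (F (φ y) / α) y) (hφp : Tendsto φ atTop (𝓝 p))
    (hψ0 : Tendsto ψ atTop (𝓝 0)) (y : ℝ) :
    α / 2 * ψ y ^ 2 - W (φ y) = -W p := by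
  set E := fun y => α / 2 * ψ y ^ 2 - W (φ y)
  have hE : ∀ y, HasDerivAt E 0 y := fun y =>
    (((hψ y).pow 2).const_mul (α / 2)).sub ((hW (φ y)).comp y (hφ y)) |>.congr_deriv <| by
      field_simp
      ring
  have hconst : ∀ y, E y = E 0 := fun y =>
    is_const_of_deriv_eq_zero (fun y => (hE y).differentiableAt) (fun y => (hE y).deriv) y 0
  have hlim : Tendsto E atTop (𝓝 (α / 2 * 0 ^ 2 - W p)) :=
    ((hψ0.pow 2).const_mul _).sub ((hW p).continuousAt.tendsto.comp hφp)
  have hE₀ := tendsto_nhds_unique (tendsto_const_nhds.congr fun y => (hconst y).symm) hlim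
  change E y = _
  rw [hconst y, hE₀]
  ring

theorem hasDerivAt_inv_cosh_sq (k y : ℝ) :
    HasDerivAt (fun y => (cosh (k * y) ^ 2)⁻¹)
      (-2 * k * (sinh (k * y) / cosh (k * y) ^ 3)) y := by
  have hcosh := (((hasDerivAt_id y).const_mul k).cosh.pow 2).inv
    (pow_ne_zero 2 (cosh_pos (k * y)).ne')
  refine hcosh.congr_deriv ?_
  have := (cosh_pos (k * y)).ne'
  simp only [id, Pi.pow_apply]
  field_simp
  ring

theorem hasDerivAt_sinh_div_cosh_pow_three (k y : ℝ) :
    HasDerivAt (fun y => sinh (k * y) / cosh (k * y) ^ 3)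
      (k * (3 * ((cosh (k * y) ^ 2)⁻¹) ^ 2 - 2 * (cosh (k * y) ^ 2)⁻¹)) y := by
  have hky := (hasDerivAt_id y).const_mul k
  have h := hky.sinh.div (hky.cosh.pow 3) (pow_ne_zero 3 (cosh_pos (k * y)).ne')
  refine h.congr_deriv ?_
  have := (cosh_pos (k * y)).ne'
  simp only [id, Pi.pow_apply]
  field_simp
  linear_combination (-3 * k * cosh (k * y) ^ 2) * sinh_sq (k * y)

theorem tendsto_inv_cosh_sq_cocompact {k : ℝ} (hk : k ≠ 0) :
    Tendsto (fun y => (cosh (k * y) ^ 2)⁻¹) (cocompact ℝ) (𝓝 0) := by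
  have hlin : Tendsto (fun y => k * y) (cocompact ℝ) (cocompact ℝ) :=
    (Homeomorph.mulLeft₀ k hk).isClosedEmbedding.tendsto_cocompact
  have hcosh : Tendsto (fun x => cosh x ^ 2) (cocompact ℝ) atTop := by
    refine tendsto_atTop_mono (fun x => ?_) (tendsto_norm_cocompact_atTop.atTop_div_const two_pos)
    have h1 := one_le_cosh x
    have h2 : |x| + 1 ≤ exp |x| := add_one_le_exp _
    have h3 : cosh x = (exp |x| + exp (-|x|)) / 2 := by rw [← cosh_abs, cosh_eq]
    rw [Real.norm_eq_abs]
    nlinarith [exp_pos (-|x|)]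
  exact (hcosh.comp hlin).inv_tendsto_atTop

theorem abs_sinh_div_cosh_pow_three_le (x : ℝ) : |sinh x / cosh x ^ 3| ≤ (cosh x ^ 2)⁻¹ := by
  have hc := cosh_pos x
  rw [abs_div, abs_of_pos (pow_pos hc 3), div_le_iff₀ (pow_pos hc 3)]
  calc |sinh x| ≤ |cosh x| := sq_le_sq.1 (by rw [sinh_sq]; linarith)
    _ = cosh x := abs_of_pos hc
    _ = (cosh x ^ 2)⁻¹ * cosh x ^ 3 := by field_simp

namespace Homoclinic

noncomputable def force (β γ c A x : ℝ) : ℝ := -A + (β + c) * x + γ / 2 * x ^ 2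

noncomputable def potential (β γ c A x : ℝ) : ℝ := -A * x + (β + c) / 2 * x ^ 2 + γ / 6 * x ^ 3

noncomputable def vectorField (α β γ c A : ℝ) (p : ℝ × ℝ) : ℝ × ℝ :=
  (p.2, force β γ c A p.1 / α)

variable {α β γ c A p s : ℝ}

theorem hasDerivAt_potential (x : ℝ) :
    HasDerivAt (potential β γ c A) (force β γ c A x) x := by
  have h := (((hasDerivAt_id x).const_mul (-A)).add
    ((hasDerivAt_pow 2 x).const_mul ((β + c) / 2))).add ((hasDerivAt_pow 3 x).const_mul (γ / 6))
  exact h.congr_deriv (by simp only [force]; ring)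

theorem locallyLipschitz_vectorField : LocallyLipschitz (vectorField α β γ c A) :=
  ContDiff.locallyLipschitz (𝕂 := ℝ) (by unfold vectorField force; fun_prop)

theorem force_div_eq_zero (hγ : γ ≠ 0) (hsq : s ^ 2 = (β + c) ^ 2 + 2 * A * γ) :
    force β γ c A ((-(β + c) + s) / γ) = 0 := by
  unfold force
  field_simp
  linear_combination hsq

theorem vectorField_eq_zero (hp : force β γ c A p = 0) :
    vectorField α β γ c A (p, 0) = 0 := by
  simp [vectorField, hp]

theorem force_add (hp : force β γ c A p = 0) (hs : β + c + γ * p = s) (h : ℝ) :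
    force β γ c A (p + h) = s * h + γ / 2 * h ^ 2 := by
  unfold force at *
  linear_combination hp + h * hs

theorem potential_add_sub (hp : force β γ c A p = 0) (hs : β + c + γ * p = s) (h : ℝ) :
    potential β γ c A (p + h) - potential β γ c A p = h ^ 2 * (s / 2 + γ / 6 * h) := by
  unfold force potential at *
  linear_combination h * hp + h ^ 2 / 2 * hs

theorem isHomoclinicSol_inv_cosh_sq (hγ : γ ≠ 0) (hp : force β γ c A p = 0)
    (hs : β + c + γ * p = s) (hs₀ : s ≠ 0) {k : ℝ} (hk : k ≠ 0) (hαk : 4 * α * k ^ 2 = s) :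
    IsHomoclinicSol α β γ c A p (fun y => p + -3 * s / γ * (cosh (k * y) ^ 2)⁻¹)
      (fun y => -3 * s / γ * (-2 * k * (sinh (k * y) / cosh (k * y) ^ 3))) := by
  set B := -3 * s / γ with hB
  have hB₀ : B ≠ 0 := div_ne_zero (mul_ne_zero (by norm_num) hs₀) hγ
  have hγB : γ * B = -3 * s := by rw [hB]; field_simp
  have hα : α ≠ 0 := by rintro rfl; exact hs₀ (by rw [← hαk]; ring)
  have hu := tendsto_inv_cosh_sq_cocompact hk
  have hv : Tendsto (fun y => sinh (k * y) / cosh (k * y) ^ 3) (cocompact ℝ) (𝓝 0) :=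
    squeeze_zero_norm (fun y => abs_sinh_div_cosh_pow_three_le (k * y)) hu
  have hφ : Tendsto (fun y => p + B * (cosh (k * y) ^ 2)⁻¹) (cocompact ℝ) (𝓝 p) := by
    simpa using (hu.const_mul B).const_add p
  have hψ : Tendsto (fun y => B * (-2 * k * (sinh (k * y) / cosh (k * y) ^ 3))) (cocompact ℝ)
      (𝓝 0) := by
    simpa using (hv.const_mul (-2 * k)).const_mul B
  rw [cocompact_eq_atBot_atTop] at hφ hψ
  refine ⟨fun y => ((hasDerivAt_inv_cosh_sq k y).const_mul B).const_add p, fun y => ?_, ?_,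
    hφ.mono_left le_sup_right, hφ.mono_left le_sup_left,
    hψ.mono_left le_sup_right, hψ.mono_left le_sup_left⟩
  · have hψ' := ((hasDerivAt_sinh_div_cosh_pow_three k y).const_mul (-2 * k)).const_mul B
    refine hψ'.congr_deriv ?_
    set u := (cosh (k * y) ^ 2)⁻¹
    have hF := force_add hp hs (B * u)
    unfold force at hF
    rw [eq_div_iff hα]
    linear_combination (-1) * hF + (B * u - 3 / 2 * B * u ^ 2) * hαk - (B * u ^ 2 / 2) * hγB
  · intro hconst
    have h0 : p + B = p := by
      refine tendsto_nhds_unique (tendsto_const_nhds.congr fun y => ?_)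
        (hφ.mono_left le_sup_right)
      simpa using congrArg Prod.fst (hconst 0 y)
    exact hB₀ (by linarith)

end Homoclinic

open Homoclinic

namespace IsHomoclinicSol

variable {α β γ c A p s : ℝ} {φ ψ : ℝ → ℝ}

theorem hasDerivAt_vectorField (h : IsHomoclinicSol α β γ c A p φ ψ) (y : ℝ) :
    HasDerivAt (fun y => (φ y, ψ y)) (vectorField α β γ c A (φ y, ψ y)) y :=
  (h.1 y).prodMk (h.2.1 y)

theorem exists_turning_point (hα : α ≠ 0) (hγ : γ ≠ 0) (hp : force β γ c A p = 0)
    (hs : β + c + γ * p = s) (h : IsHomoclinicSol α β γ c A p φ ψ) :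
    ∃ y₀, φ y₀ = p - 3 * s / γ ∧ ψ y₀ = 0 := by
  obtain ⟨hφ, hψ, hnc, hφtop, hφbot, hψtop, -⟩ := h
  obtain ⟨y₀, hy₀⟩ := exists_hasDerivAt_eq_zero_of_tendsto_atBot_atTop hφ hφbot hφtop
  refine ⟨y₀, ?_, hy₀⟩
  have henergy := energy_eq_of_tendsto_atTop (F := force β γ c A) hα hasDerivAt_potential
    hφ hψ hφtop hψtop y₀
  have hW : (φ y₀ - p) ^ 2 * (s / 2 + γ / 6 * (φ y₀ - p)) = 0 := by
    rw [← potential_add_sub hp hs, add_sub_cancel]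
    rw [hy₀] at henergy
    linarith
  rcases mul_eq_zero.1 hW with hstat | hturn
  · refine absurd (fun y z => ?_) hnc
    have hconst := ODE_solution_unique_of_locallyLipschitz locallyLipschitz_vectorField
      (fun y => (hφ y).prodMk (hψ y)) (g := fun _ => (p, 0))
      (fun y => vectorField_eq_zero hp ▸ hasDerivAt_const y _) (t₀ := y₀)
      (by rw [hy₀, sub_eq_zero.1 (pow_eq_zero_iff two_ne_zero |>.1 hstat)])
    exact (congrFun hconst y).trans (congrFun hconst z).symm
  · field_simp
    linarith

theorem exists_shift_eq (hα : α ≠ 0) (hγ : γ ≠ 0) (hp : force β γ c A p = 0)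
    (hs : β + c + γ * p = s) {φ₁ ψ₁ φ₂ ψ₂ : ℝ → ℝ} (h₁ : IsHomoclinicSol α β γ c A p φ₁ ψ₁)
    (h₂ : IsHomoclinicSol α β γ c A p φ₂ ψ₂) :
    ∃ y₁, ∀ y, (φ₂ y, ψ₂ y) = (φ₁ (y + y₁), ψ₁ (y + y₁)) := by
  obtain ⟨y₀, hφ₁, hψ₁⟩ := h₁.exists_turning_point hα hγ hp hs
  obtain ⟨z₀, hφ₂, hψ₂⟩ := h₂.exists_turning_point hα hγ hp hs
  refine ⟨y₀ - z₀, congrFun (ODE_solution_unique_of_locallyLipschitz locallyLipschitz_vectorField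
    h₂.hasDerivAt_vectorField
    (fun y => (h₁.hasDerivAt_vectorField (y + (y₀ - z₀))).comp_add_const y _) (t₀ := z₀) ?_)⟩
  simp only [add_sub_cancel, hφ₁, hψ₁, hφ₂, hψ₂]

end IsHomoclinicSol

/-- If `D := (β+c)² + 2Aγ > 0` and `φ₊ := (−(β+c) + √D)/γ`, then there exists
a nonconstant solution of (★) homoclinic to `(φ₊, 0)`, and it is unique up to translation. -/
theorem stmt_6 (α β γ c A : ℝ) (hα : 0 < α) (hγ : γ ≠ 0)
    (D : ℝ) (hD : D = (β + c) ^ 2 + 2 * A * γ) (hDpos : 0 < D)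
    (φp : ℝ) (hφp : φp = (-(β + c) + Real.sqrt D) / γ) :
    (∃ φ ψ : ℝ → ℝ, IsHomoclinicSol α β γ c A φp φ ψ) ∧
    (∀ φ₁ ψ₁ φ₂ ψ₂ : ℝ → ℝ,
      IsHomoclinicSol α β γ c A φp φ₁ ψ₁ →
      IsHomoclinicSol α β γ c A φp φ₂ ψ₂ →
      ∃ y₁ : ℝ, ∀ y : ℝ, (φ₂ y, ψ₂ y) = (φ₁ (y + y₁), ψ₁ (y + y₁))) := by
  have hs₀ : 0 < √D := sqrt_pos.2 hDpos
  have hp : force β γ c A φp = 0 :=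
    hφp ▸ force_div_eq_zero hγ (by rw [sq_sqrt hDpos.le, hD])
  have hs : β + c + γ * φp = √D := by rw [hφp]; field_simp; ring
  have hk₀ : √(√D / (4 * α)) ≠ 0 := (sqrt_pos.2 (by positivity)).ne'
  have hk : 4 * α * √(√D / (4 * α)) ^ 2 = √D := by
    rw [sq_sqrt (by positivity)]; field_simp
  exact ⟨⟨_, _, isHomoclinicSol_inv_cosh_sq hγ hp hs hs₀.ne' hk₀ hk⟩,
    fun _ _ _ _ h₁ h₂ => h₁.exists_shift_eq hα.ne' hγ hp hs h₂⟩
end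

section
/- Let α, β, γ, c be real numbers with α > 0, γ ≠ 0, β + c > 0, and take A = 0 in the system (★). If (φ, ψ) : ℝ → ℝ² is a nonconstant solution of (★) with lim_{y→±∞} φ(y) = 0 and lim_{y→±∞} ψ(y) = 0, then ψ(y)² = ((β+c)/α) φ(y)² + (γ/(3α)) φ(y)³ for all y ∈ ℝ. -/
/-! The energy `ψ² - V(φ)`, with `V x = (β+c)/α x² + γ/(3α) x³` chosen so that `V'(φ)` is
twice the right-hand side of `ψ'`, is a first integral of (★):
it is constant along the solution, and its limit at `+∞` is `0`. -/

open Filter Topology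

theorem eq_of_hasDerivAt_zero_of_tendsto_atTop {f : ℝ → ℝ} {L : ℝ}
    (hf : ∀ y, HasDerivAt f 0 y) (hlim : Tendsto f atTop (𝓝 L)) (y : ℝ) : f y = L := by
  have hconst : f = fun _ => f y := funext fun x =>
    is_const_of_deriv_eq_zero (fun z => (hf z).differentiableAt) (fun z => (hf z).deriv) x y
  rw [hconst] at hlim
  exact tendsto_nhds_unique tendsto_const_nhds hlim

theorem hasDerivAt_sq_sub_potential_eq_zero {φ ψ f V : ℝ → ℝ}
    (hφ : ∀ y, HasDerivAt φ (ψ y) y) (hψ : ∀ y, HasDerivAt ψ (f (φ y)) y)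
    (hV : ∀ x, HasDerivAt V (2 * f x) x) (y : ℝ) :
    HasDerivAt (fun y => ψ y ^ 2 - V (φ y)) 0 y := by
  refine (((hψ y).fun_pow 2).fun_sub ((hV (φ y)).comp y (hφ y))).congr_deriv ?_
  simp only [Nat.cast_ofNat]
  ring

theorem stmt_7_general (α β γ c : ℝ)
    (φ ψ : ℝ → ℝ)
    (hφ : ∀ y : ℝ, HasDerivAt φ (ψ y) y)
    (hψ : ∀ y : ℝ, HasDerivAt ψ (((β + c) * φ y + γ / 2 * (φ y) ^ 2) / α) y)
    (hφtop : Filter.Tendsto φ Filter.atTop (nhds 0))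
    (hψtop : Filter.Tendsto ψ Filter.atTop (nhds 0)) :
    ∀ y : ℝ, (ψ y) ^ 2 = (β + c) / α * (φ y) ^ 2 + γ / (3 * α) * (φ y) ^ 3 := by
  set V : ℝ → ℝ := fun x => (β + c) / α * x ^ 2 + γ / (3 * α) * x ^ 3
  have hV : ∀ x, HasDerivAt V (2 * (((β + c) * x + γ / 2 * x ^ 2) / α)) x := fun x =>
    (((hasDerivAt_pow 2 x).const_mul ((β + c) / α)).fun_add
      ((hasDerivAt_pow 3 x).const_mul (γ / (3 * α)))).congr_deriv (by push_cast; ring)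
  have hE := hasDerivAt_sq_sub_potential_eq_zero hφ hψ hV
  have hlim : Tendsto (fun y => ψ y ^ 2 - V (φ y)) atTop (𝓝 0) := by
    simpa [V] using (hψtop.pow 2).sub ((hV 0).continuousAt.tendsto.comp hφtop)
  intro y
  exact sub_eq_zero.mp (eq_of_hasDerivAt_zero_of_tendsto_atTop hE hlim y)

/-- For the system (★) with `A = 0` (`φ' = ψ`,
`ψ' = ((β+c)φ + (γ/2)φ²)/α`), any nonconstant solution with `φ, ψ → 0` at `±∞`
satisfies `ψ² = ((β+c)/α) φ² + (γ/(3α)) φ³` everywhere. -/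
theorem stmt_7 (α β γ c : ℝ) (hα : 0 < α) (hγ : γ ≠ 0) (hβc : 0 < β + c)
    (φ ψ : ℝ → ℝ)
    (hφ : ∀ y : ℝ, HasDerivAt φ (ψ y) y)
    (hψ : ∀ y : ℝ, HasDerivAt ψ (((β + c) * φ y + γ / 2 * (φ y) ^ 2) / α) y)
    (hnc : ¬ ∀ y z : ℝ, (φ y, ψ y) = (φ z, ψ z))
    (hφtop : Filter.Tendsto φ Filter.atTop (nhds 0))
    (hφbot : Filter.Tendsto φ Filter.atBot (nhds 0))
    (hψtop : Filter.Tendsto ψ Filter.atTop (nhds 0))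
    (hψbot : Filter.Tendsto ψ Filter.atBot (nhds 0)) :
    ∀ y : ℝ, (ψ y) ^ 2 = (β + c) / α * (φ y) ^ 2 + γ / (3 * α) * (φ y) ^ 3 :=
  stmt_7_general α β γ c φ ψ hφ hψ hφtop hψtop
end

section
/- Let α, β, γ, c be real numbers with α > 0, γ ≠ 0, β + c > 0, and take A = 0 in the system (★). If (φ, ψ) : ℝ → ℝ² is a nonconstant solution of (★) with lim_{y→±∞} φ(y) = 0 and lim_{y→±∞} ψ(y) = 0, then there exists a unique y₀ ∈ ℝ such that φ(y₀) = −3(β+c)/γ and ψ(y₀) = 0. -/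
/-!
Along a solution the energy `ψ² / 2 - ((β+c) φ² / 2 + γ φ³ / 6) / α` is conserved, and it
vanishes because the solution decays at infinity. A nonzero extremum of `φ` (which exists since
`φ` is nonzero somewhere and tends to `0`) has `ψ = 0`, so the energy identity forces
`φ = -3(β+c)/γ` there. If two times gave this same state, uniqueness for the autonomous system
would make the solution periodic, and a periodic solution decaying at infinity is identically
zero, contradicting `φ(y₀) ≠ 0`.
-/

open Filter Set Topology Function

theorem Function.Periodic.eq_of_tendsto_atTop {Y : Type*} [TopologicalSpace Y] [T2Space Y]
    {f : ℝ → Y} {T : ℝ} {l : Y} (hf : Periodic f T) (hT : T ≠ 0)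
    (hlim : Tendsto f atTop (𝓝 l)) (t : ℝ) : f t = l := by
  wlog hTpos : 0 < T generalizing T
  · exact this hf.neg (neg_ne_zero.2 hT) (by linarith [hT.lt_or_gt.resolve_right hTpos])
  have hseq : Tendsto (fun n : ℕ => t + n * T) atTop atTop :=
    tendsto_atTop_add_const_left _ t (tendsto_natCast_atTop_atTop.atTop_mul_const hTpos)
  exact tendsto_nhds_unique tendsto_const_nhds
    ((hlim.comp hseq).congr fun n => hf.nat_mul n t)

section AutonomousODE

variable {E : Type*} [NormedAddCommGroup E] [NormedSpace ℝ E] {v : E → E} {x : ℝ → E}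

theorem periodic_of_hasDerivAt_of_eq {s : Set E} {K : NNReal} (hv : LipschitzOnWith K v s)
    (hx : ∀ t, HasDerivAt x (v (x t)) t) (hxs : ∀ t, x t ∈ s) {t₀ t₁ : ℝ} (h : x t₀ = x t₁) :
    Periodic x (t₁ - t₀) := by
  have hshift : (fun t => x (t + (t₁ - t₀))) = x :=
    ODE_solution_unique_univ (s := fun _ => s) (t₀ := t₀) (fun _ => hv)
      (fun t => ⟨(hx _).comp_add_const t _, hxs _⟩) (fun t => ⟨hx t, hxs t⟩)
      (by simpa using h.symm)
  exact congrFun hshift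

theorem periodic_of_tendsto_cocompact {l : E} (hv : LocallyLipschitz v)
    (hx : ∀ t, HasDerivAt x (v (x t)) t) (hlim : Tendsto x (cocompact ℝ) (𝓝 l))
    {t₀ t₁ : ℝ} (h : x t₀ = x t₁) : Periodic x (t₁ - t₀) := by
  have hxc : Continuous x := continuous_iff_continuousAt.2 fun t => (hx t).continuousAt
  obtain ⟨K, hK⟩ := hv.locallyLipschitzOn.exists_lipschitzOnWith_of_compact
    (hlim.isCompact_insert_range_of_cocompact hxc)
  exact periodic_of_hasDerivAt_of_eq hK hx (fun t => mem_insert_of_mem _ (mem_range_self t)) h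

end AutonomousODE

theorem exists_isLocalExtr_ne_zero {X : Type*} [TopologicalSpace X] {f : X → ℝ}
    (hf : Continuous f) (hlim : Tendsto f (cocompact X) (𝓝 0)) {a : X} (ha : f a ≠ 0) :
    ∃ y, IsLocalExtr f y ∧ f y ≠ 0 := by
  rcases ha.lt_or_gt with hneg | hpos
  · obtain ⟨y, hy⟩ := hf.exists_forall_le' a
      ((hlim.eventually (eventually_gt_nhds hneg)).mono fun _ => le_of_lt)
    exact ⟨y, .inl (.of_forall hy), ((hy a).trans_lt hneg).ne⟩
  · obtain ⟨y, hy⟩ := hf.exists_forall_ge' a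
      ((hlim.eventually (eventually_lt_nhds hpos)).mono fun _ => le_of_lt)
    exact ⟨y, .inr (.of_forall hy), (hpos.trans_le (hy a)).ne'⟩

section Energy

variable {φ ψ g G : ℝ → ℝ}

theorem energy_eq_of_hasDerivAt (hφ : ∀ y, HasDerivAt φ (ψ y) y)
    (hψ : ∀ y, HasDerivAt ψ (g (φ y)) y) (hG : ∀ p, HasDerivAt G (g p) p) (y z : ℝ) :
    ψ y ^ 2 / 2 - G (φ y) = ψ z ^ 2 / 2 - G (φ z) := by
  have hE : ∀ t, HasDerivAt (fun t => ψ t ^ 2 / 2 - G (φ t)) 0 t := fun t => by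
    refine ((((hψ t).pow 2).div_const 2).sub ((hG (φ t)).comp t (hφ t))).congr_deriv ?_
    ring
  exact is_const_of_deriv_eq_zero (fun t => (hE t).differentiableAt) (fun t => (hE t).deriv) y z

theorem energy_eq_of_tendsto (hφ : ∀ y, HasDerivAt φ (ψ y) y)
    (hψ : ∀ y, HasDerivAt ψ (g (φ y)) y) (hG : ∀ p, HasDerivAt G (g p) p) {a : ℝ}
    (hφlim : Tendsto φ atTop (𝓝 a)) (hψlim : Tendsto ψ atTop (𝓝 0)) (y : ℝ) :
    ψ y ^ 2 / 2 - G (φ y) = -G a := by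
  have hlim : Tendsto (fun t => ψ t ^ 2 / 2 - G (φ t)) atTop (𝓝 (0 ^ 2 / 2 - G a)) :=
    ((hψlim.pow 2).div_const 2).sub ((hG a).continuousAt.tendsto.comp hφlim)
  rw [zero_pow two_ne_zero, zero_div, zero_sub] at hlim
  exact tendsto_nhds_unique
    (tendsto_const_nhds.congr fun t => energy_eq_of_hasDerivAt hφ hψ hG y t) hlim

end Energy

noncomputable def quadraticForceField (α κ γ : ℝ) (p : ℝ × ℝ) : ℝ × ℝ :=
  (p.2, (κ * p.1 + γ / 2 * p.1 ^ 2) / α)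

theorem locallyLipschitz_quadraticForceField (α κ γ : ℝ) :
    LocallyLipschitz (quadraticForceField α κ γ) :=
  ContDiff.locallyLipschitz (𝕂 := ℝ) (by unfold quadraticForceField; fun_prop)

theorem hasDerivAt_quadraticForce_potential (α κ γ p : ℝ) :
    HasDerivAt (fun p => (κ * p ^ 2 / 2 + γ * p ^ 3 / 6) / α) ((κ * p + γ / 2 * p ^ 2) / α) p := by
  refine ((((hasDerivAt_pow 2 p).const_mul κ).div_const 2).add
    (((hasDerivAt_pow 3 p).const_mul γ).div_const 6)).div_const α |>.congr_deriv ?_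
  ring

theorem eq_neg_three_mul_div_of_cubic_eq_zero {α κ γ p : ℝ} (hα : α ≠ 0) (hγ : γ ≠ 0)
    (hp : p ≠ 0) (h : (κ * p ^ 2 / 2 + γ * p ^ 3 / 6) / α = 0) : p = -3 * κ / γ := by
  have hfactor : p ^ 2 * (3 * κ + γ * p) = 0 := by
    field_simp at h
    linear_combination h / 2
  rw [eq_div_iff hγ]
  linear_combination (mul_eq_zero.1 hfactor).resolve_left (pow_ne_zero 2 hp)

theorem stmt_8_general (α β γ c : ℝ) (hα : 0 < α) (hγ : γ ≠ 0)
    (φ ψ : ℝ → ℝ)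
    (hφ : ∀ y : ℝ, HasDerivAt φ (ψ y) y)
    (hψ : ∀ y : ℝ, HasDerivAt ψ (((β + c) * φ y + γ / 2 * (φ y) ^ 2) / α) y)
    (hnc : ¬ ∀ y z : ℝ, (φ y, ψ y) = (φ z, ψ z))
    (hφtop : Filter.Tendsto φ Filter.atTop (nhds 0))
    (hφbot : Filter.Tendsto φ Filter.atBot (nhds 0))
    (hψtop : Filter.Tendsto ψ Filter.atTop (nhds 0))
    (hψbot : Filter.Tendsto ψ Filter.atBot (nhds 0)) :
    ∃! y₀ : ℝ, φ y₀ = -3 * (β + c) / γ ∧ ψ y₀ = 0 := by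
  have hpot (y : ℝ) (hψy : ψ y = 0) :
      ((β + c) * φ y ^ 2 / 2 + γ * φ y ^ 3 / 6) / α = 0 := by
    simpa [hψy] using energy_eq_of_tendsto hφ hψ
      (hasDerivAt_quadraticForce_potential α (β + c) γ) hφtop hψtop y
  obtain ⟨a, ha⟩ : ∃ a, φ a ≠ 0 := by
    by_contra! hzero
    have hψzero : ∀ y, ψ y = 0 := fun y =>
      (hφ y).unique (by simpa [funext hzero] using hasDerivAt_const y (0 : ℝ))
    exact hnc fun y z => by simp [hzero, hψzero]
  have hφco : Tendsto φ (cocompact ℝ) (𝓝 0) := by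
    rw [cocompact_eq_atBot_atTop]; exact hφbot.sup hφtop
  have hψco : Tendsto ψ (cocompact ℝ) (𝓝 0) := by
    rw [cocompact_eq_atBot_atTop]; exact hψbot.sup hψtop
  obtain ⟨y₀, hext, hy₀⟩ := exists_isLocalExtr_ne_zero
    (continuous_iff_continuousAt.2 fun y => (hφ y).continuousAt) hφco ha
  have hψ₀ : ψ y₀ = 0 := hext.hasDerivAt_eq_zero (hφ y₀)
  have hφ₀ : φ y₀ = -3 * (β + c) / γ :=
    eq_neg_three_mul_div_of_cubic_eq_zero hα.ne' hγ hy₀ (hpot y₀ hψ₀)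
  refine ⟨y₀, ⟨hφ₀, hψ₀⟩, fun y₁ ⟨hφ₁, hψ₁⟩ => ?_⟩
  by_contra hne
  have hx : ∀ y, HasDerivAt (fun t => (φ t, ψ t))
      (quadraticForceField α (β + c) γ (φ y, ψ y)) y := fun y => (hφ y).prodMk (hψ y)
  have hper := periodic_of_tendsto_cocompact (locallyLipschitz_quadraticForceField _ _ _) hx
    (hφco.prodMk_nhds hψco) (t₀ := y₁) (t₁ := y₀) (by simp only [hφ₀, hψ₀, hφ₁, hψ₁])
  have hzero :=
    hper.eq_of_tendsto_atTop (sub_ne_zero.2 (Ne.symm hne)) (hφtop.prodMk_nhds hψtop) y₀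
  exact hy₀ congr(Prod.fst $hzero)

/-- For the system (★) with `A = 0` (`φ' = ψ`,
`ψ' = ((β+c)φ + (γ/2)φ²)/α`), any nonconstant solution with `φ, ψ → 0` at `±∞`
admits a unique `y₀ ∈ ℝ` with `φ(y₀) = −3(β+c)/γ` and `ψ(y₀) = 0`. -/
theorem stmt_8 (α β γ c : ℝ) (hα : 0 < α) (hγ : γ ≠ 0) (hβc : 0 < β + c)
    (φ ψ : ℝ → ℝ)
    (hφ : ∀ y : ℝ, HasDerivAt φ (ψ y) y)
    (hψ : ∀ y : ℝ, HasDerivAt ψ (((β + c) * φ y + γ / 2 * (φ y) ^ 2) / α) y)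
    (hnc : ¬ ∀ y z : ℝ, (φ y, ψ y) = (φ z, ψ z))
    (hφtop : Filter.Tendsto φ Filter.atTop (nhds 0))
    (hφbot : Filter.Tendsto φ Filter.atBot (nhds 0))
    (hψtop : Filter.Tendsto ψ Filter.atTop (nhds 0))
    (hψbot : Filter.Tendsto ψ Filter.atBot (nhds 0)) :
    ∃! y₀ : ℝ, φ y₀ = -3 * (β + c) / γ ∧ ψ y₀ = 0 :=
  stmt_8_general α β γ c hα hγ φ ψ hφ hψ hnc hφtop hφbot hψtop hψbot
end

section
/- Let α, β, γ, c be real numbers with α > 0, γ > 0, β + c > 0, and take A = 0 in the system (★). Let (φ, ψ) : ℝ → ℝ² be a nonconstant solution of (★) with lim_{y→±∞} φ(y) = 0 and lim_{y→±∞} ψ(y) = 0, and let y₀ ∈ ℝ be the unique point with φ(y₀) = −3(β+c)/γ and ψ(y₀) = 0. Then φ(y) < 0 for all y ∈ ℝ, φ is strictly decreasing on (−∞, y₀), and φ is strictly increasing on (y₀, ∞). -/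
open Set Filter Topology

/-! The energy `α ψ²/2 - (β + c) φ²/2 - γ φ³/6` is conserved and vanishes at `+∞`, so
`α ψ² = φ² ((β + c) + γ φ / 3)`. By uniqueness for the locally Lipschitz system, a nonconstant
solution never reaches the equilibrium `(0, 0)`; hence `φ` never vanishes, and it is negative
since `φ y₀ < 0`. At every zero of `ψ` the energy forces `φ = -3 (β + c) / γ`, where
`ψ' = 3 (β + c)² / (2 α γ) > 0`. A function whose derivative is positive at each of its zeros
changes sign at most once, from negative to positive, so `φ' = ψ` is negative before `y₀` and
positive after it. -/

theorem eq_of_hasDerivAt_of_locallyLipschitz {E : Type*} [NormedAddCommGroup E]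
    [NormedSpace ℝ E] {v : E → E} (hv : LocallyLipschitz v) {f g : ℝ → E}
    (hf : ∀ t, HasDerivAt f (v (f t)) t) (hg : ∀ t, HasDerivAt g (v (g t)) t)
    {t₀ : ℝ} (h : f t₀ = g t₀) : f = g := by
  have hclosed : IsClosed {t | f t = g t} :=
    isClosed_eq (continuous_iff_continuousAt.2 fun t => (hf t).continuousAt)
      (continuous_iff_continuousAt.2 fun t => (hg t).continuousAt)
  have hopen : IsOpen {t | f t = g t} := by
    refine isOpen_iff_mem_nhds.2 fun t ht => ?_
    obtain ⟨K, U, hU, hlip⟩ := hv (f t)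
    have hfU : ∀ᶠ s in 𝓝 t, f s ∈ U := (hf t).continuousAt.preimage_mem_nhds hU
    have hgU : ∀ᶠ s in 𝓝 t, g s ∈ U :=
      (hg t).continuousAt.preimage_mem_nhds (by rwa [← ht.out])
    exact ODE_solution_unique_of_eventually (s := fun _ => U) (.of_forall fun _ => hlip)
      ((Eventually.of_forall hf).and hfU) ((Eventually.of_forall hg).and hgU) ht
  exact funext (eq_univ_iff_forall.1 (IsClopen.eq_univ ⟨hclosed, hopen⟩ ⟨t₀, h⟩))

theorem eq_zero_of_hasDerivAt_zero_of_tendsto {f : ℝ → ℝ} (hf : ∀ x, HasDerivAt f 0 x)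
    (hlim : Tendsto f atTop (𝓝 0)) (x : ℝ) : f x = 0 := by
  have hconst : f = fun _ => f x :=
    funext fun y => is_const_of_deriv_eq_zero (fun z => (hf z).differentiableAt)
      (fun z => (hf z).deriv) y x
  rw [hconst] at hlim
  exact tendsto_nhds_unique tendsto_const_nhds hlim

section SignChange

variable {f f' : ℝ → ℝ} {x : ℝ}

theorem HasDerivAt.eventually_pos_right_of_eq_zero (hf : HasDerivAt f (f' x) x)
    (hpos : 0 < f' x) (hx : f x = 0) : ∀ᶠ t in 𝓝[>] x, 0 < f t := by
  have hslope := (hasDerivAt_iff_tendsto_slope.mp hf).mono_left (nhdsGT_le_nhdsNE x)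
  filter_upwards [hslope.eventually (eventually_gt_nhds hpos), self_mem_nhdsWithin]
    with t hs (ht : x < t)
  rw [slope_def_field, hx, sub_zero] at hs
  exact (div_pos_iff_of_pos_right (sub_pos.2 ht)).1 hs

theorem HasDerivAt.eventually_neg_left_of_eq_zero (hf : HasDerivAt f (f' x) x)
    (hpos : 0 < f' x) (hx : f x = 0) : ∀ᶠ t in 𝓝[<] x, f t < 0 := by
  have hslope := (hasDerivAt_iff_tendsto_slope.mp hf).mono_left (nhdsLT_le_nhdsNE x)
  filter_upwards [hslope.eventually (eventually_gt_nhds hpos), self_mem_nhdsWithin]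
    with t hs (ht : t < x)
  rw [slope_def_field, hx, sub_zero] at hs
  rcases div_pos_iff.1 hs with h | h
  · linarith [h.2]
  · exact h.1

theorem not_neg_of_deriv_pos_at_zeros (hf : ∀ x, HasDerivAt f (f' x) x)
    (hpos : ∀ x, f x = 0 → 0 < f' x) {a b : ℝ} (ha : f a = 0) (hab : a < b) : ¬ f b < 0 := by
  intro hb
  have hcont : Continuous f := continuous_iff_continuousAt.2 fun t => (hf t).continuousAt
  obtain ⟨c, ⟨hcI, hc⟩, hcmax⟩ := ((isCompact_Icc (a := a) (b := b)).inter_right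
    (isClosed_eq hcont continuous_const)).exists_isGreatest ⟨a, ⟨le_rfl, hab.le⟩, ha⟩
  have hcb : c < b := hcI.2.lt_of_ne (by rintro rfl; exact hb.ne hc)
  obtain ⟨t, hft, htI⟩ := ((hf c).eventually_pos_right_of_eq_zero (hpos c hc) hc).and
    (Ioo_mem_nhdsGT hcb) |>.exists
  obtain ⟨ξ, hξI, hξ⟩ := intermediate_value_Icc' htI.2.le hcont.continuousOn ⟨hb.le, hft.le⟩
  have : ξ ≤ c := hcmax ⟨⟨hcI.1.trans (htI.1.trans_le hξI.1).le, hξI.2⟩, hξ⟩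
  linarith [htI.1, hξI.1]

theorem pos_of_deriv_pos_at_zeros (hf : ∀ x, HasDerivAt f (f' x) x)
    (hpos : ∀ x, f x = 0 → 0 < f' x) {a b : ℝ} (ha : f a = 0) (hab : a < b) : 0 < f b := by
  rcases lt_trichotomy (f b) 0 with hb | hb | hb
  · exact absurd hb (not_neg_of_deriv_pos_at_zeros hf hpos ha hab)
  · obtain ⟨t, hft, htI⟩ := ((hf b).eventually_neg_left_of_eq_zero (hpos b hb) hb).and
      (Ioo_mem_nhdsLT hab) |>.exists
    exact absurd hft (not_neg_of_deriv_pos_at_zeros hf hpos ha htI.1)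
  · exact hb

theorem neg_of_deriv_pos_at_zeros (hf : ∀ x, HasDerivAt f (f' x) x)
    (hpos : ∀ x, f x = 0 → 0 < f' x) {a b : ℝ} (ha : f a = 0) (hba : b < a) : f b < 0 := by
  have hg : ∀ t, HasDerivAt (fun t => -f (-t)) (f' (-t)) t := fun t =>
    ((hf (-t)).comp t (hasDerivAt_neg t)).neg.congr_deriv (by ring)
  have := pos_of_deriv_pos_at_zeros hg (fun t ht => hpos (-t) (neg_eq_zero.1 ht))
    (by simpa using ha) (neg_lt_neg hba)
  simpa using this

end SignChange

section TravelingWave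

variable {α κ γ : ℝ} {φ ψ : ℝ → ℝ}

theorem energy_eq_of_tendsto_zero (hα : α ≠ 0) (hφ : ∀ y, HasDerivAt φ (ψ y) y)
    (hψ : ∀ y, HasDerivAt ψ ((κ * φ y + γ / 2 * φ y ^ 2) / α) y)
    (hφtop : Tendsto φ atTop (𝓝 0)) (hψtop : Tendsto ψ atTop (𝓝 0)) (y : ℝ) :
    α * ψ y ^ 2 = κ * φ y ^ 2 + γ / 3 * φ y ^ 3 := by
  set E : ℝ → ℝ := fun y => α / 2 * ψ y ^ 2 - κ / 2 * φ y ^ 2 - γ / 6 * φ y ^ 3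
  have hE : ∀ x, HasDerivAt E 0 x := fun x =>
    ((((hψ x).pow 2).const_mul (α / 2)).sub (((hφ x).pow 2).const_mul (κ / 2))).sub
      (((hφ x).pow 3).const_mul (γ / 6)) |>.congr_deriv (by field_simp; ring)
  have hlim : Tendsto E atTop (𝓝 0) := by
    simpa using (((hψtop.pow 2).const_mul (α / 2)).sub ((hφtop.pow 2).const_mul (κ / 2))).sub
      ((hφtop.pow 3).const_mul (γ / 6))
  have hEy : E y = 0 := eq_zero_of_hasDerivAt_zero_of_tendsto hE hlim y
  simp only [E] at hEy
  linarith

theorem ne_zero_of_energy_eq (hα : α ≠ 0) (hφ : ∀ y, HasDerivAt φ (ψ y) y)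
    (hψ : ∀ y, HasDerivAt ψ ((κ * φ y + γ / 2 * φ y ^ 2) / α) y)
    (henergy : ∀ y, α * ψ y ^ 2 = κ * φ y ^ 2 + γ / 3 * φ y ^ 3)
    (hnc : ¬ ∀ y z : ℝ, (φ y, ψ y) = (φ z, ψ z)) (z : ℝ) : φ z ≠ 0 := by
  intro hφz
  have hψz : ψ z = 0 := by simpa [hφz, hα] using henergy z
  set v : ℝ × ℝ → ℝ × ℝ := fun p => (p.2, (κ * p.1 + γ / 2 * p.1 ^ 2) / α)
  have hv : LocallyLipschitz v := (by fun_prop : ContDiff ℝ 1 v).locallyLipschitz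
  have hsol : (fun t => (φ t, ψ t)) = fun _ => 0 :=
    eq_of_hasDerivAt_of_locallyLipschitz hv (fun t => (hφ t).prodMk (hψ t))
      (fun t => (hasDerivAt_const t 0).congr_deriv (by ext <;> simp [v]))
      (t₀ := z) (by simp [hφz, hψz])
  exact hnc fun y w => (congrFun hsol y).trans (congrFun hsol w).symm

theorem accel_pos_of_potential_eq_zero (hα : 0 < α) (hγ : 0 < γ) (hκ : 0 < κ) {p : ℝ}
    (hpot : κ * p ^ 2 + γ / 3 * p ^ 3 = 0) (hp : p ≠ 0) :
    0 < (κ * p + γ / 2 * p ^ 2) / α := by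
  have hpeq : γ * p = -3 * κ := by
    have : p ^ 2 * (3 * κ + γ * p) = 0 := by linear_combination 3 * hpot
    linarith [(mul_eq_zero.1 this).resolve_left (pow_ne_zero 2 hp)]
  have hpneg : p < 0 := by nlinarith
  have : κ * p + γ / 2 * p ^ 2 = -(κ * p) / 2 := by linear_combination p / 2 * hpeq
  rw [this]
  exact div_pos (by nlinarith) hα

end TravelingWave

theorem stmt_9_general (α β γ c : ℝ) (hα : 0 < α) (hγ : 0 < γ) (hβc : 0 < β + c)
    (φ ψ : ℝ → ℝ)
    (hφ : ∀ y : ℝ, HasDerivAt φ (ψ y) y)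
    (hψ : ∀ y : ℝ, HasDerivAt ψ (((β + c) * φ y + γ / 2 * (φ y) ^ 2) / α) y)
    (hnc : ¬ ∀ y z : ℝ, (φ y, ψ y) = (φ z, ψ z))
    (hφtop : Filter.Tendsto φ Filter.atTop (nhds 0))
    (hψtop : Filter.Tendsto ψ Filter.atTop (nhds 0))
    (y₀ : ℝ) (hy₀ : φ y₀ = -3 * (β + c) / γ ∧ ψ y₀ = 0) :
    (∀ y : ℝ, φ y < 0) ∧
    StrictAntiOn φ (Set.Iio y₀) ∧
    StrictMonoOn φ (Set.Ioi y₀) := by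
  obtain ⟨hφy₀, hψy₀⟩ := hy₀
  have henergy := energy_eq_of_tendsto_zero hα.ne' hφ hψ hφtop hψtop
  have hφne := ne_zero_of_energy_eq hα.ne' hφ hψ henergy hnc
  have hcont : Continuous φ := continuous_iff_continuousAt.2 fun y => (hφ y).continuousAt
  have hφneg : ∀ y, φ y < 0 := fun y => by
    by_contra! hy
    have hy₀neg : φ y₀ < 0 := by rw [hφy₀]; exact div_neg_of_neg_of_pos (by linarith) hγ
    obtain ⟨z, hz⟩ := intermediate_value_univ y₀ y hcont ⟨hy₀neg.le, hy⟩
    exact hφne z hz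
  have haccel : ∀ y, ψ y = 0 → 0 < ((β + c) * φ y + γ / 2 * φ y ^ 2) / α := fun y hy =>
    accel_pos_of_potential_eq_zero hα hγ hβc (by simpa [hy] using (henergy y).symm) (hφne y)
  refine ⟨hφneg, ?_, ?_⟩
  · refine strictAntiOn_of_deriv_neg (convex_Iio y₀) hcont.continuousOn fun y hy => ?_
    rw [(hφ y).deriv]
    exact neg_of_deriv_pos_at_zeros hψ haccel hψy₀ (by simpa using hy)
  · refine strictMonoOn_of_deriv_pos (convex_Ioi y₀) hcont.continuousOn fun y hy => ?_
    rw [(hφ y).deriv]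
    exact pos_of_deriv_pos_at_zeros hψ haccel hψy₀ (by simpa using hy)

/-- For the system (★) with `A = 0` and `γ > 0`, along the nonconstant
solution with `φ, ψ → 0` at `±∞` and `φ(y₀) = −3(β+c)/γ`, `ψ(y₀) = 0`, the profile `φ`
is everywhere negative, strictly decreasing on `(−∞, y₀)` and strictly increasing on
`(y₀, ∞)`. -/
theorem stmt_9 (α β γ c : ℝ) (hα : 0 < α) (hγ : 0 < γ) (hβc : 0 < β + c)
    (φ ψ : ℝ → ℝ)
    (hφ : ∀ y : ℝ, HasDerivAt φ (ψ y) y)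
    (hψ : ∀ y : ℝ, HasDerivAt ψ (((β + c) * φ y + γ / 2 * (φ y) ^ 2) / α) y)
    (hnc : ¬ ∀ y z : ℝ, (φ y, ψ y) = (φ z, ψ z))
    (hφtop : Filter.Tendsto φ Filter.atTop (nhds 0))
    (hφbot : Filter.Tendsto φ Filter.atBot (nhds 0))
    (hψtop : Filter.Tendsto ψ Filter.atTop (nhds 0))
    (hψbot : Filter.Tendsto ψ Filter.atBot (nhds 0))
    (y₀ : ℝ) (hy₀ : φ y₀ = -3 * (β + c) / γ ∧ ψ y₀ = 0) :
    (∀ y : ℝ, φ y < 0) ∧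
    StrictAntiOn φ (Set.Iio y₀) ∧
    StrictMonoOn φ (Set.Ioi y₀) :=
  stmt_9_general α β γ c hα hγ hβc φ ψ hφ hψ hnc hφtop hψtop y₀ hy₀
end

section
/- Let α, β, γ, c be real numbers with α > 0, γ < 0, β + c > 0, and take A = 0 in the system (★). Let (φ, ψ) : ℝ → ℝ² be a nonconstant solution of (★) with lim_{y→±∞} φ(y) = 0 and lim_{y→±∞} ψ(y) = 0, and let y₀ ∈ ℝ be the unique point with φ(y₀) = −3(β+c)/γ and ψ(y₀) = 0. Then φ(y) > 0 for all y ∈ ℝ, φ is strictly increasing on (−∞, y₀), and φ is strictly decreasing on (y₀, ∞). -/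
/-!
Along the solution, the energy `α ψ² - (β + c) φ² - (γ / 3) φ³` is conserved, and it vanishes at
`y₀`, so `α ψ² = φ² ((β + c) + (γ / 3) φ)`. On a compact interval this gives `|ψ| ≤ K |φ|`, and
Grönwall's inequality shows that `φ` cannot vanish without vanishing identically; hence `φ > 0`.
The energy identity then forces `φ ≤ m := -3(β + c)/γ`, with `ψ = 0` exactly where `φ = m`. Since
`ψ' < 0` at the crest, `φ` reaches `m` only at `y₀`; so `ψ` has no zero besides `y₀`, has constant
sign on each side of it, and that sign is the one compatible with `φ ≤ φ y₀`.
-/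

open Set Filter Topology

theorem eq_zero_of_norm_deriv_le_mul_norm_self_uIcc {E : Type*} [NormedAddCommGroup E]
    [NormedSpace ℝ E] {f f' : ℝ → E} {K a b : ℝ} (hf : ∀ x, HasDerivAt f (f' x) x)
    (bound : ∀ x ∈ uIcc a b, ‖f' x‖ ≤ K * ‖f x‖) (ha : f a = 0) : f b = 0 := by
  have hcont : Continuous f := continuous_iff_continuousAt.2 fun x ↦ (hf x).continuousAt
  rcases le_total a b with hab | hba
  · exact eq_zero_of_abs_deriv_le_mul_abs_self_of_eq_zero_right hcont.continuousOn
      (fun x _ ↦ (hf x).hasDerivWithinAt) ha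
      (fun x hx ↦ bound x (Icc_subset_uIcc (Ico_subset_Icc_self hx))) b (right_mem_Icc.2 hab)
  · have hf_neg : ∀ t, HasDerivAt (fun t ↦ f (-t)) ((-1 : ℝ) • f' (-t)) t :=
      fun t ↦ (hf (-t)).scomp t (hasDerivAt_neg t)
    have := eq_zero_of_abs_deriv_le_mul_abs_self_of_eq_zero_right
      (hcont.comp continuous_neg).continuousOn (fun t _ ↦ (hf_neg t).hasDerivWithinAt)
      (by simpa using ha) (fun t ht ↦ by
        rw [norm_smul, norm_neg, norm_one, one_mul]
        exact bound (-t) (Icc_subset_uIcc' ⟨by linarith [ht.2], by linarith [ht.1]⟩))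
      (-b) ⟨neg_le_neg hba, le_rfl⟩
    simpa using this

theorem IsPreconnected.pos_of_ne_zero {X α : Type*} [TopologicalSpace X] [LinearOrder α]
    [TopologicalSpace α] [OrderClosedTopology α] [Zero α] {s : Set X} (hs : IsPreconnected s)
    {f : X → α} (hf : ContinuousOn f s) (h0 : ∀ x ∈ s, f x ≠ 0) {a : X} (ha : a ∈ s)
    (hfa : 0 < f a) {x : X} (hx : x ∈ s) : 0 < f x := by
  by_contra! hfx
  obtain ⟨z, hz, hfz⟩ := hs.intermediate_value hx ha hf ⟨hfx, hfa.le⟩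
  exact h0 z hz hfz

theorem strictAntiOn_Ici_of_forall_le {f f' : ℝ → ℝ} {a : ℝ} (hf : ∀ x, HasDerivAt f (f' x) x)
    (hf' : ContinuousOn f' (Ioi a)) (hf'0 : ∀ x ∈ Ioi a, f' x ≠ 0) (hmax : ∀ x, f x ≤ f a) :
    StrictAntiOn f (Ici a) := by
  have hcont : Continuous f := continuous_iff_continuousAt.2 fun x ↦ (hf x).continuousAt
  have hderiv : ∀ x ∈ interior (Ici a), HasDerivWithinAt f (f' x) (interior (Ici a)) x :=
    fun x _ ↦ (hf x).hasDerivWithinAt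
  refine strictAntiOn_of_hasDerivWithinAt_neg (convex_Ici a) hcont.continuousOn hderiv ?_
  rw [interior_Ici]
  intro x hx
  by_contra! hx0
  -- otherwise `f' > 0` on all of `(a, ∞)` and `f` would rise above its maximum `f a`
  have hpos : ∀ y ∈ Ioi a, 0 < f' y := fun y hy ↦
    isPreconnected_Ioi.pos_of_ne_zero hf' hf'0 hx (hx0.lt_of_ne' (hf'0 x hx)) hy
  have hmono := strictMonoOn_of_hasDerivWithinAt_pos (convex_Ici a) hcont.continuousOn hderiv
    (by rwa [interior_Ici])
  exact (hmono self_mem_Ici (show a ≤ a + 1 by linarith) (by linarith)).not_ge (hmax _)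

theorem strictMonoOn_Iic_of_forall_le {f f' : ℝ → ℝ} {a : ℝ} (hf : ∀ x, HasDerivAt f (f' x) x)
    (hf' : ContinuousOn f' (Iio a)) (hf'0 : ∀ x ∈ Iio a, f' x ≠ 0) (hmax : ∀ x, f x ≤ f a) :
    StrictMonoOn f (Iic a) := by
  have hneg : MapsTo (fun t : ℝ ↦ -t) (Ioi (-a)) (Iio a) := fun _ ht ↦ neg_lt.1 (mem_Ioi.1 ht)
  have hanti := strictAntiOn_Ici_of_forall_le (f := fun t ↦ f (-t)) (f' := fun t ↦ -f' (-t))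
    (a := -a) (fun t ↦ by simpa [Function.comp_def] using (hf (-t)).comp t (hasDerivAt_neg t))
    (hf'.comp continuousOn_neg hneg).neg (fun t ht ↦ neg_ne_zero.2 (hf'0 _ (hneg ht)))
    (fun t ↦ by simpa using hmax (-t))
  intro x hx y hy hxy
  simpa using hanti (mem_Ici.2 (neg_le_neg hy)) (mem_Ici.2 (neg_le_neg hx)) (neg_lt_neg hxy)

namespace SolitaryWave

/-- The system (★) with `A = 0`, where `k` stands for `β + c`. -/
structure IsSolution (α k γ : ℝ) (φ ψ : ℝ → ℝ) : Prop where
  hasDerivAt_fst : ∀ y, HasDerivAt φ (ψ y) y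
  hasDerivAt_snd : ∀ y, HasDerivAt ψ ((k * φ y + γ / 2 * φ y ^ 2) / α) y

variable {α k γ : ℝ}

theorem le_crest {p q : ℝ} (hα : 0 ≤ α) (hγ : γ < 0) (hE : α * q ^ 2 = p ^ 2 * (k + γ / 3 * p))
    (hp : p ≠ 0) : p ≤ -3 * k / γ := by
  have : 0 ≤ k + γ / 3 * p :=
    nonneg_of_mul_nonneg_right (hE ▸ by positivity) (pow_two_pos_of_ne_zero hp)
  rw [le_div_iff_of_neg hγ]
  linarith

theorem eq_crest_of_eq_zero {p q : ℝ} (hγ : γ ≠ 0) (hE : α * q ^ 2 = p ^ 2 * (k + γ / 3 * p))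
    (hp : p ≠ 0) (hq : q = 0) : p = -3 * k / γ := by
  have : k + γ / 3 * p = 0 := by
    simpa [hp, hq] using hE.symm
  rw [eq_div_iff hγ]
  linarith

namespace IsSolution

variable {φ ψ : ℝ → ℝ}

theorem continuous_fst (h : IsSolution α k γ φ ψ) : Continuous φ :=
  continuous_iff_continuousAt.2 fun y ↦ (h.hasDerivAt_fst y).continuousAt

theorem continuous_snd (h : IsSolution α k γ φ ψ) : Continuous ψ :=
  continuous_iff_continuousAt.2 fun y ↦ (h.hasDerivAt_snd y).continuousAt

theorem energy_eq (h : IsSolution α k γ φ ψ) (hα : α ≠ 0) (y z : ℝ) :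
    α * ψ y ^ 2 - k * φ y ^ 2 - γ / 3 * φ y ^ 3 = α * ψ z ^ 2 - k * φ z ^ 2 - γ / 3 * φ z ^ 3 := by
  have hE : ∀ y, HasDerivAt (fun y ↦ α * ψ y ^ 2 - k * φ y ^ 2 - γ / 3 * φ y ^ 3) 0 y := by
    intro y
    refine (((((h.hasDerivAt_snd y).fun_pow 2).const_mul α).sub
      (((h.hasDerivAt_fst y).fun_pow 2).const_mul k)).sub
      (((h.hasDerivAt_fst y).fun_pow 3).const_mul (γ / 3))).congr_deriv ?_
    field_simp
    ring
  exact is_const_of_deriv_eq_zero (fun y ↦ (hE y).differentiableAt) (fun y ↦ (hE y).deriv) y z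

theorem energy_eq_zero (h : IsSolution α k γ φ ψ) (hα : α ≠ 0) (hγ : γ ≠ 0) {y₀ : ℝ}
    (hφy₀ : φ y₀ = -3 * k / γ) (hψy₀ : ψ y₀ = 0) (y : ℝ) :
    α * ψ y ^ 2 = φ y ^ 2 * (k + γ / 3 * φ y) := by
  have hE₀ : α * 0 ^ 2 - k * (-3 * k / γ) ^ 2 - γ / 3 * (-3 * k / γ) ^ 3 = 0 := by
    field_simp
    ring
  have := h.energy_eq hα y y₀
  rw [hφy₀, hψy₀, hE₀] at this
  linear_combination this

theorem fst_ne_zero (h : IsSolution α k γ φ ψ) (hα : 0 < α)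
    (hE : ∀ y, α * ψ y ^ 2 = φ y ^ 2 * (k + γ / 3 * φ y)) {y₀ : ℝ} (hy₀ : φ y₀ ≠ 0) (y : ℝ) :
    φ y ≠ 0 := by
  intro hy
  obtain ⟨B, hB⟩ := isCompact_uIcc.exists_bound_of_continuousOn
    (h.continuous_fst.continuousOn (s := uIcc y y₀))
  set C := (|k| + |γ| / 3 * B) / α
  refine hy₀ (eq_zero_of_norm_deriv_le_mul_norm_self_uIcc h.hasDerivAt_fst (K := √C)
    (fun x hx ↦ ?_) hy)
  rw [Real.norm_eq_abs, Real.norm_eq_abs, ← Real.sqrt_sq_eq_abs (φ x),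
    ← Real.sqrt_mul' _ (sq_nonneg _)]
  apply Real.abs_le_sqrt
  rw [div_mul_eq_mul_div, le_div_iff₀ hα, mul_comm, hE]
  have hcoef : k + γ / 3 * φ x ≤ |k| + |γ| / 3 * B := by
    have : γ / 3 * φ x ≤ |γ| / 3 * |φ x| := by
      simpa [abs_mul, abs_div] using le_abs_self (γ / 3 * φ x)
    have hφB : |φ x| ≤ B := hB x hx
    linarith [le_abs_self k, mul_le_mul_of_nonneg_left hφB (abs_nonneg γ)]
  linarith [mul_le_mul_of_nonneg_left hcoef (sq_nonneg (φ x))]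

theorem fst_pos (h : IsSolution α k γ φ ψ) (hα : 0 < α)
    (hE : ∀ y, α * ψ y ^ 2 = φ y ^ 2 * (k + γ / 3 * φ y)) {y₀ : ℝ} (hy₀ : 0 < φ y₀) (y : ℝ) :
    0 < φ y :=
  isPreconnected_univ.pos_of_ne_zero h.continuous_fst.continuousOn
    (fun y _ ↦ h.fst_ne_zero hα hE hy₀.ne' y) (mem_univ y₀) hy₀ (mem_univ y)

theorem eq_of_fst_eq_crest (h : IsSolution α k γ φ ψ) (hα : 0 < α) (hγ : γ < 0) (hk : k ≠ 0)
    (hE : ∀ y, α * ψ y ^ 2 = φ y ^ 2 * (k + γ / 3 * φ y)) (hpos : ∀ y, 0 < φ y) {a b : ℝ}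
    (ha : φ a = -3 * k / γ) (hb : φ b = -3 * k / γ) : a = b := by
  set m := -3 * k / γ
  have hle : ∀ y, φ y ≤ m := fun y ↦ le_crest hα.le hγ (hE y) (hpos y).ne'
  have hψ_eq_zero : ∀ y, φ y = m → ψ y = 0 := fun y hy ↦
    IsLocalMax.hasDerivAt_eq_zero (Eventually.of_forall fun x ↦ (hle x).trans hy.ge)
      (h.hasDerivAt_fst y)
  -- `φ'' = 3k² / (2αγ) ≠ 0` at the crest, so `φ` cannot stay there on an open set
  have not_const : ∀ t, ¬ ∀ᶠ s in 𝓝 t, φ s = m := by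
    intro t ht
    have hψt : ψ =ᶠ[𝓝 t] fun _ ↦ 0 := ht.mono hψ_eq_zero
    have h0 := (h.hasDerivAt_snd t).unique ((hasDerivAt_const t 0).congr_of_eventuallyEq hψt)
    have hcurv : (k * m + γ / 2 * m ^ 2) / α = 3 * k ^ 2 / (2 * γ * α) := by
      simp only [m]
      field_simp
      ring
    rw [ht.self_of_nhds, hcurv] at h0
    simp [hk, hγ.ne, hα.ne'] at h0
  wlog hab : a ≤ b generalizing a b
  · exact (this hb ha (le_of_not_ge hab)).symm
  by_contra hne
  have hab' : a < b := hab.lt_of_ne hne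
  obtain ⟨z, hz, hmin⟩ := isCompact_Icc.exists_isMinOn (nonempty_Icc.2 hab)
    h.continuous_fst.continuousOn
  have hz_crest : φ z = m := by
    rcases eq_endpoints_or_mem_Ioo_of_mem_Icc hz with rfl | rfl | hz'
    · exact ha
    · exact hb
    · exact eq_crest_of_eq_zero hγ.ne (hE z) (hpos z).ne'
        ((hmin.isLocalMin (Icc_mem_nhds hz'.1 hz'.2)).hasDerivAt_eq_zero (h.hasDerivAt_fst z))
  refine not_const ((a + b) / 2) ?_
  filter_upwards [Icc_mem_nhds (by linarith : a < (a + b) / 2) (by linarith : (a + b) / 2 < b)]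
    with s hs
  exact le_antisymm (hle s) (hz_crest ▸ hmin hs)

end IsSolution

end SolitaryWave

theorem stmt_10_general (α β γ c : ℝ) (hα : 0 < α) (hγ : γ < 0) (hβc : 0 < β + c)
    (φ ψ : ℝ → ℝ)
    (hφ : ∀ y : ℝ, HasDerivAt φ (ψ y) y)
    (hψ : ∀ y : ℝ, HasDerivAt ψ (((β + c) * φ y + γ / 2 * (φ y) ^ 2) / α) y)
    (y₀ : ℝ) (hy₀ : φ y₀ = -3 * (β + c) / γ ∧ ψ y₀ = 0) :
    (∀ y : ℝ, 0 < φ y) ∧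
    StrictMonoOn φ (Set.Iio y₀) ∧
    StrictAntiOn φ (Set.Ioi y₀) := by
  obtain ⟨hφy₀, hψy₀⟩ := hy₀
  have h : SolitaryWave.IsSolution α (β + c) γ φ ψ := ⟨hφ, hψ⟩
  have hE := h.energy_eq_zero hα.ne' hγ.ne hφy₀ hψy₀
  have hpos := h.fst_pos hα hE (hφy₀ ▸ div_pos_of_neg_of_neg (by linarith) hγ)
  have hmax : ∀ y, φ y ≤ φ y₀ := fun y ↦
    hφy₀ ▸ SolitaryWave.le_crest hα.le hγ (hE y) (hpos y).ne'
  have hψ_ne_zero : ∀ y ≠ y₀, ψ y ≠ 0 := fun y hy hψy ↦ hy <|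
    h.eq_of_fst_eq_crest hα hγ hβc.ne' hE hpos
      (SolitaryWave.eq_crest_of_eq_zero hγ.ne (hE y) (hpos y).ne' hψy) hφy₀
  exact ⟨hpos,
    (strictMonoOn_Iic_of_forall_le hφ h.continuous_snd.continuousOn
      (fun y hy ↦ hψ_ne_zero y hy.ne) hmax).mono Iio_subset_Iic_self,
    (strictAntiOn_Ici_of_forall_le hφ h.continuous_snd.continuousOn
      (fun y hy ↦ hψ_ne_zero y hy.ne') hmax).mono Ioi_subset_Ici_self⟩

/-- For the system (★) with `A = 0` and `γ < 0`, along the nonconstant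
solution with `φ, ψ → 0` at `±∞` and `φ(y₀) = −3(β+c)/γ`, `ψ(y₀) = 0`, the profile `φ`
is everywhere positive, strictly increasing on `(−∞, y₀)` and strictly decreasing on
`(y₀, ∞)`. -/
theorem stmt_10 (α β γ c : ℝ) (hα : 0 < α) (hγ : γ < 0) (hβc : 0 < β + c)
    (φ ψ : ℝ → ℝ)
    (hφ : ∀ y : ℝ, HasDerivAt φ (ψ y) y)
    (hψ : ∀ y : ℝ, HasDerivAt ψ (((β + c) * φ y + γ / 2 * (φ y) ^ 2) / α) y)
    (hnc : ¬ ∀ y z : ℝ, (φ y, ψ y) = (φ z, ψ z))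
    (hφtop : Filter.Tendsto φ Filter.atTop (nhds 0))
    (hφbot : Filter.Tendsto φ Filter.atBot (nhds 0))
    (hψtop : Filter.Tendsto ψ Filter.atTop (nhds 0))
    (hψbot : Filter.Tendsto ψ Filter.atBot (nhds 0))
    (y₀ : ℝ) (hy₀ : φ y₀ = -3 * (β + c) / γ ∧ ψ y₀ = 0) :
    (∀ y : ℝ, 0 < φ y) ∧
    StrictMonoOn φ (Set.Iio y₀) ∧
    StrictAntiOn φ (Set.Ioi y₀) :=
  stmt_10_general α β γ c hα hγ hβc φ ψ hφ hψ y₀ hy₀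
end

section
/- Let α, β, γ, c, y₀ be real numbers with α > 0, γ ≠ 0 and β + c > 0, and define φ : ℝ → ℝ by φ(y) := −(3(β+c)/γ) · sech²( (1/2)·√((β+c)/α) · (y − y₀) ). Then φ is smooth and satisfies −α φ''(y) + (β+c) φ(y) + (γ/2) φ(y)² = 0 for all y ∈ ℝ; in particular −α φ''' + (β+c) φ' + γ φ φ' = 0 on ℝ. -/
/-- The hyperbolic secant `sech x = 1 / cosh x`. -/
noncomputable def sech (x : ℝ) : ℝ := 1 / Real.cosh x

/-- The profile
`φ(y) = −(3(β+c)/γ) sech²((1/2)√((β+c)/α)(y − y₀))` is smooth and satisfies the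
once-integrated profile equation `−α φ'' + (β+c) φ + (γ/2) φ² = 0`; in particular
`−α φ''' + (β+c) φ' + γ φ φ' = 0` on `ℝ`. -/
theorem stmt_11 (α β γ c y₀ : ℝ) (hα : 0 < α) (hγ : γ ≠ 0) (hβc : 0 < β + c)
    (φ : ℝ → ℝ)
    (hφ : ∀ y : ℝ, φ y =
      -(3 * (β + c) / γ) * sech ((1 / 2) * Real.sqrt ((β + c) / α) * (y - y₀)) ^ 2) :
    ContDiff ℝ (⊤ : ℕ∞) φ ∧
    (∀ y : ℝ, -α * iteratedDeriv 2 φ y + (β + c) * φ y + γ / 2 * (φ y) ^ 2 = 0) ∧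
    (∀ y : ℝ, -α * iteratedDeriv 3 φ y + (β + c) * deriv φ y + γ * φ y * deriv φ y = 0) := by
  set k : ℝ := 1 / 2 * Real.sqrt ((β + c) / α) with hk
  set C : ℝ := -(3 * (β + c) / γ) with hC
  have hα' : α ≠ 0 := hα.ne'
  have hk2 : α * k ^ 2 = (β + c) / 4 := by
    have h : Real.sqrt ((β + c) / α) ^ 2 = (β + c) / α :=
      Real.sq_sqrt (by positivity)
    rw [hk, mul_pow, h]; field_simp; ring
  have hγC : γ * C = -(3 * (β + c)) := by rw [hC]; field_simp
  have hcosh : ∀ x : ℝ, Real.cosh x ≠ 0 := fun x => (Real.cosh_pos x).ne'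
  have hφeq : φ = fun y => C * (Real.cosh (k * (y - y₀)))⁻¹ ^ 2 := by
    funext y; rw [hφ y]; simp [sech, hC, hk]
  clear_value k C
  have hu : ∀ y : ℝ, HasDerivAt (fun y => k * (y - y₀)) k y := fun y => by
    simpa using ((hasDerivAt_id y).sub_const y₀).const_mul k
  set φ₁ : ℝ → ℝ := fun y =>
    -2 * C * k * Real.sinh (k * (y - y₀)) / Real.cosh (k * (y - y₀)) ^ 3 with hφ₁
  have hd1 : ∀ y : ℝ, HasDerivAt φ (φ₁ y) y := by
    intro y
    have h1 : HasDerivAt (fun y => Real.cosh (k * (y - y₀)))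
        (Real.sinh (k * (y - y₀)) * k) y := (Real.hasDerivAt_cosh _).comp y (hu y)
    have h2 := ((h1.inv (hcosh _)).pow 2).const_mul C
    rw [hφeq]
    refine h2.congr_deriv ?_; symm
    simp only [hφ₁, Pi.inv_apply, Nat.cast_ofNat, Nat.reduceSub, pow_one]
    have hc := hcosh (k * (y - y₀))
    generalize Real.cosh (k * (y - y₀)) = ch at hc ⊢
    field_simp
  have hderiv : deriv φ = φ₁ := funext fun y => (hd1 y).deriv
  set φ₂ : ℝ → ℝ := fun y =>
    -2 * C * k ^ 2 * (3 - 2 * Real.cosh (k * (y - y₀)) ^ 2) /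
      Real.cosh (k * (y - y₀)) ^ 4 with hφ₂
  have hd2 : ∀ y : ℝ, HasDerivAt φ₁ (φ₂ y) y := by
    intro y
    have h1 : HasDerivAt (fun y => Real.cosh (k * (y - y₀)))
        (Real.sinh (k * (y - y₀)) * k) y := (Real.hasDerivAt_cosh _).comp y (hu y)
    have hs : HasDerivAt (fun y => Real.sinh (k * (y - y₀)))
        (Real.cosh (k * (y - y₀)) * k) y := (Real.hasDerivAt_sinh _).comp y (hu y)
    have h3 := h1.pow 3
    have h4 := (hs.div h3 (pow_ne_zero 3 (hcosh _))).const_mul (-2 * C * k)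
    simp only [← mul_div_assoc, Pi.div_apply, Pi.pow_apply] at h4
    refine h4.congr_deriv ?_; symm
    have hsq : Real.sinh (k * (y - y₀)) ^ 2 = Real.cosh (k * (y - y₀)) ^ 2 - 1 :=
      Real.sinh_sq _
    simp only [hφ₂, Nat.cast_ofNat, Nat.reduceSub]
    have hc := hcosh (k * (y - y₀))
    generalize Real.cosh (k * (y - y₀)) = ch at hc hsq ⊢
    field_simp
    linear_combination (-3 * C * k ^ 2) * hsq
  have hit2 : iteratedDeriv 2 φ = φ₂ := by
    rw [show (2 : ℕ) = 1 + 1 from rfl, iteratedDeriv_succ, iteratedDeriv_one, hderiv]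
    exact funext fun y => (hd2 y).deriv
  have eq2 : ∀ y : ℝ, -α * iteratedDeriv 2 φ y + (β + c) * φ y + γ / 2 * φ y ^ 2 = 0 := by
    intro y
    rw [hit2, hφeq]
    have hc := hcosh (k * (y - y₀))
    simp only [hφ₂, hC]
    field_simp
    linear_combination ((β + c) * (24 * Real.cosh (k * (y - y₀)) ^ 2 - 36)) * hk2
  refine ⟨?_, eq2, ?_⟩
  · rw [hφeq]
    have hinner : ContDiff ℝ (⊤ : ℕ∞) (fun y : ℝ => k * (y - y₀)) :=
      contDiff_const.mul (contDiff_id.sub contDiff_const)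
    exact contDiff_const.mul
      (((Real.contDiff_cosh.comp hinner).inv (fun y => hcosh _)).pow 2)
  · intro y
    have h1 : HasDerivAt (fun y => Real.cosh (k * (y - y₀)))
        (Real.sinh (k * (y - y₀)) * k) y := (Real.hasDerivAt_cosh _).comp y (hu y)
    have hnum : HasDerivAt (fun y => -2 * C * k ^ 2 * (3 - 2 * Real.cosh (k * (y - y₀)) ^ 2))
        (-2 * C * k ^ 2 * (-(2 * (2 * Real.cosh (k * (y - y₀)) ^ 1 * (Real.sinh (k * (y - y₀)) * k))))) y :=
      ((((h1.pow 2).const_mul 2).const_sub 3)).const_mul _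
    have hden := h1.pow 4
    have hd3 : HasDerivAt φ₂ _ y := hnum.div hden (pow_ne_zero 4 (hcosh _))
    -- derivative of the identically-zero combination is zero
    have hzero : (fun y => -α * φ₂ y + (β + c) * φ y + γ / 2 * φ y ^ 2) = fun _ => 0 := by
      funext z
      have := eq2 z
      rw [hit2] at this
      simpa using this
    have H1 := ((hd3.const_mul (-α)).add ((hd1 y).const_mul (β + c))).add
      (((hd1 y).pow 2).const_mul (γ / 2))
    have H2 : HasDerivAt (fun y => -α * φ₂ y + (β + c) * φ y + γ / 2 * φ y ^ 2) 0 y := by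
      rw [hzero]; exact hasDerivAt_const y 0
    have huniq := H1.unique H2
    have hit3 : iteratedDeriv 3 φ y = deriv φ₂ y := by
      rw [show (3 : ℕ) = 2 + 1 from rfl, iteratedDeriv_succ, hit2]
    rw [hit3, hd3.deriv, hderiv]
    linear_combination huniq
end

section
/- Let α, β, γ, c be real numbers with α > 0, γ ≠ 0 and β + c > 0, and take A = 0 in the system (★). If (φ, ψ) : ℝ → ℝ² is a nonconstant solution of (★) with lim_{y→±∞} φ(y) = 0 and lim_{y→±∞} ψ(y) = 0, then there exists y₀ ∈ ℝ such that φ(y) = −(3(β+c)/γ) · sech²( (1/2)·√((β+c)/α) · (y − y₀) ) for all y ∈ ℝ. -/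
open Real Filter Set Metric Topology

theorem ODE_solution_unique_univ_of_contDiff {E : Type*} [NormedAddCommGroup E]
    [NormedSpace ℝ E] [FiniteDimensional ℝ E] {v : E → E} (hv : ContDiff ℝ 1 v)
    {f g : ℝ → E} (hf : ∀ t, HasDerivAt f (v (f t)) t) (hg : ∀ t, HasDerivAt g (v (g t)) t)
    {t₀ : ℝ} (heq : f t₀ = g t₀) : f = g := by
  ext t
  set a := min t t₀ - 1
  set b := max t t₀ + 1
  have hfc : Continuous f := continuous_iff_continuousAt.2 fun t ↦ (hf t).continuousAt
  have hgc : Continuous g := continuous_iff_continuousAt.2 fun t ↦ (hg t).continuousAt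
  obtain ⟨R, hR⟩ := (((isCompact_Icc (a := a) (b := b)).image hfc).union
    ((isCompact_Icc (a := a) (b := b)).image hgc)).isBounded.subset_closedBall 0
  obtain ⟨K, hK⟩ := hv.contDiffOn.exists_lipschitzOnWith one_ne_zero (convex_closedBall 0 R)
    (isCompact_closedBall 0 R)
  have hfR : ∀ s ∈ Ioo a b, f s ∈ closedBall 0 R :=
    fun s hs ↦ hR (.inl ⟨s, Ioo_subset_Icc_self hs, rfl⟩)
  have hgR : ∀ s ∈ Ioo a b, g s ∈ closedBall 0 R :=
    fun s hs ↦ hR (.inr ⟨s, Ioo_subset_Icc_self hs, rfl⟩)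
  refine ODE_solution_unique_of_mem_Icc (v := fun _ ↦ v) (fun _ _ ↦ hK)
    (t₀ := t₀) ⟨by grind, by grind⟩ hfc.continuousOn (fun s _ ↦ hf s) hfR
    hgc.continuousOn (fun s _ ↦ hg s) hgR heq ⟨by grind, by grind⟩

theorem exists_hasDerivAt_eq_zero_of_tendsto_zero {f f' : ℝ → ℝ}
    (hf : ∀ x, HasDerivAt f (f' x) x) (hbot : Tendsto f atBot (𝓝 0))
    (htop : Tendsto f atTop (𝓝 0)) {x₁ : ℝ} (hx₁ : f x₁ ≠ 0) :
    ∃ x, f' x = 0 ∧ f x ≠ 0 := by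
  wlog hpos : 0 < f x₁ generalizing f f'
  · obtain ⟨x, hx, hfx⟩ := this (f := fun x ↦ -f x) (f' := fun x ↦ -f' x)
      (fun x ↦ (hf x).neg) (by simpa using hbot.neg) (by simpa using htop.neg)
      (neg_ne_zero.2 hx₁) (neg_pos.2 ((not_lt.1 hpos).lt_of_ne hx₁))
    exact ⟨x, neg_eq_zero.1 hx, fun h ↦ hfx (by simp [h])⟩
  have hco : Tendsto f (cocompact ℝ) (𝓝 0) := by
    rw [cocompact_eq_atBot_atTop]; exact hbot.sup htop
  obtain ⟨x, hx⟩ := (continuous_iff_continuousAt.2 fun x ↦ (hf x).continuousAt).exists_forall_ge'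
    x₁ ((hco.eventually_lt_const hpos).mono fun _ h ↦ h.le)
  exact ⟨x, IsLocalMax.hasDerivAt_eq_zero (.of_forall hx) (hf x), (hpos.trans_le (hx x₁)).ne'⟩

noncomputable def solitonField (α κ γ : ℝ) (p : ℝ × ℝ) : ℝ × ℝ :=
  (p.2, (κ * p.1 + γ / 2 * p.1 ^ 2) / α)

theorem contDiff_solitonField (α κ γ : ℝ) : ContDiff ℝ 1 (solitonField α κ γ) := by
  unfold solitonField; fun_prop

noncomputable def soliton (m k y₀ y : ℝ) : ℝ × ℝ :=
  (m / cosh (k * (y - y₀)) ^ 2, -(2 * m * k) * sinh (k * (y - y₀)) / cosh (k * (y - y₀)) ^ 3)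

theorem hasDerivAt_soliton {α κ γ m k : ℝ} (hα : α ≠ 0) (hk : 4 * α * k ^ 2 = κ)
    (hm : γ * m = -(3 * κ)) (y₀ y : ℝ) :
    HasDerivAt (soliton m k y₀) (solitonField α κ γ (soliton m k y₀ y)) y := by
  have hu : HasDerivAt (fun y ↦ k * (y - y₀)) k y := by
    simpa using ((hasDerivAt_id y).sub_const y₀).const_mul k
  have hch := (hasDerivAt_cosh _).comp y hu
  have hsh := (hasDerivAt_sinh _).comp y hu
  have hcosh : cosh (k * (y - y₀)) ≠ 0 := (cosh_pos _).ne'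
  have hs := sinh_sq (k * (y - y₀))
  refine ((hasDerivAt_const y m).div (hch.pow 2) (pow_ne_zero 2 hcosh)).prodMk
    ((hsh.const_mul _).div (hch.pow 3) (pow_ne_zero 3 hcosh)) |>.congr_deriv ?_
  simp only [soliton, solitonField, Function.comp_def, Pi.pow_apply, Prod.mk.injEq]
  constructor
  · field_simp
    ring
  · field_simp
    rw [hs]
    linear_combination (2 * m * cosh (k * (y - y₀)) ^ 4 - 3 * m * cosh (k * (y - y₀)) ^ 2) * hk
      - m * cosh (k * (y - y₀)) ^ 2 * hm

theorem energy_eq_zero_of_tendsto {α κ γ : ℝ} (hα : α ≠ 0) {φ ψ : ℝ → ℝ}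
    (hφ : ∀ y, HasDerivAt φ (ψ y) y)
    (hψ : ∀ y, HasDerivAt ψ ((κ * φ y + γ / 2 * φ y ^ 2) / α) y)
    (hφtop : Tendsto φ atTop (𝓝 0)) (hψtop : Tendsto ψ atTop (𝓝 0)) (y : ℝ) :
    α * ψ y ^ 2 = κ * φ y ^ 2 + γ / 3 * φ y ^ 3 := by
  set E : ℝ → ℝ := fun y ↦ α * ψ y ^ 2 - κ * φ y ^ 2 - γ / 3 * φ y ^ 3
  have hE : ∀ y, HasDerivAt E 0 y := fun y ↦
    ((((hψ y).pow 2).const_mul α).sub (((hφ y).pow 2).const_mul κ)).sub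
      (((hφ y).pow 3).const_mul (γ / 3)) |>.congr_deriv (by field_simp; ring)
  have hEconst : ∀ y, E y = E 0 := fun y ↦
    is_const_of_deriv_eq_zero (fun x ↦ (hE x).differentiableAt) (fun x ↦ (hE x).deriv) y 0
  have hElim : Tendsto E atTop (𝓝 0) := by
    simpa using (((hψtop.pow 2).const_mul α).sub ((hφtop.pow 2).const_mul κ)).sub
      ((hφtop.pow 3).const_mul (γ / 3))
  have hE0 : E 0 = 0 :=
    tendsto_nhds_unique (tendsto_const_nhds.congr fun y ↦ (hEconst y).symm) hElim
  have := (hEconst y).trans hE0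
  simp only [E] at this
  linarith

theorem stmt_13_general (α β γ c : ℝ) (hα : 0 < α) (hγ : γ ≠ 0) (hβc : 0 < β + c)
    (φ ψ : ℝ → ℝ)
    (hφ : ∀ y : ℝ, HasDerivAt φ (ψ y) y)
    (hψ : ∀ y : ℝ, HasDerivAt ψ (((β + c) * φ y + γ / 2 * (φ y) ^ 2) / α) y)
    (hnc : ¬ ∀ y z : ℝ, (φ y, ψ y) = (φ z, ψ z))
    (hφtop : Filter.Tendsto φ Filter.atTop (nhds 0))
    (hφbot : Filter.Tendsto φ Filter.atBot (nhds 0))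
    (hψtop : Filter.Tendsto ψ Filter.atTop (nhds 0)) :
    ∃ y₀ : ℝ, ∀ y : ℝ, φ y =
      -(3 * (β + c) / γ) * sech ((1 / 2) * Real.sqrt ((β + c) / α) * (y - y₀)) ^ 2 := by
  obtain ⟨y₁, hy₁⟩ : ∃ y₁, φ y₁ ≠ 0 := by
    by_contra! h
    have hψ0 : ∀ y, ψ y = 0 := fun y ↦
      (hφ y).unique (by simpa [funext h] using hasDerivAt_const y (0 : ℝ))
    exact hnc fun y z ↦ by simp [h, hψ0]
  obtain ⟨y₀, hψy₀, hφy₀⟩ := exists_hasDerivAt_eq_zero_of_tendsto_zero hφ hφbot hφtop hy₁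
  set m := -(3 * (β + c) / γ)
  set k := √((β + c) / α) / 2
  have hm : γ * m = -(3 * (β + c)) := by simp only [m]; field_simp
  have hk : 4 * α * k ^ 2 = β + c := by
    rw [div_pow, sq_sqrt (div_pos hβc hα).le]; field_simp; norm_num
  have hφm : φ y₀ = m := by
    have hE := energy_eq_zero_of_tendsto hα.ne' hφ hψ hφtop hψtop y₀
    rw [hψy₀] at hE
    have : φ y₀ ^ 2 * γ * (φ y₀ - m) = 0 := by linear_combination (-3) * hE - φ y₀ ^ 2 * hm
    simpa [hφy₀, hγ, sub_eq_zero] using this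
  have hsol := ODE_solution_unique_univ_of_contDiff (contDiff_solitonField α (β + c) γ)
    (fun y ↦ (hφ y).prodMk (hψ y)) (hasDerivAt_soliton hα.ne' hk hm y₀)
    (t₀ := y₀) (by simp [soliton, hφm, hψy₀])
  refine ⟨y₀, fun y ↦ ?_⟩
  rw [show φ y = (soliton m k y₀ y).1 from congrArg (fun f ↦ (f y).1) hsol]
  simp only [soliton, sech, k]
  ring_nf

/-- Any nonconstant solution of (★) with `A = 0` (`φ' = ψ`,
`ψ' = ((β+c)φ + (γ/2)φ²)/α`) satisfying `φ, ψ → 0` at `±∞` is of the form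
`φ(y) = −(3(β+c)/γ) sech²((1/2)√((β+c)/α)(y − y₀))` for some `y₀ ∈ ℝ`. -/
theorem stmt_13 (α β γ c : ℝ) (hα : 0 < α) (hγ : γ ≠ 0) (hβc : 0 < β + c)
    (φ ψ : ℝ → ℝ)
    (hφ : ∀ y : ℝ, HasDerivAt φ (ψ y) y)
    (hψ : ∀ y : ℝ, HasDerivAt ψ (((β + c) * φ y + γ / 2 * (φ y) ^ 2) / α) y)
    (hnc : ¬ ∀ y z : ℝ, (φ y, ψ y) = (φ z, ψ z))
    (hφtop : Filter.Tendsto φ Filter.atTop (nhds 0))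
    (hφbot : Filter.Tendsto φ Filter.atBot (nhds 0))
    (hψtop : Filter.Tendsto ψ Filter.atTop (nhds 0))
    (hψbot : Filter.Tendsto ψ Filter.atBot (nhds 0)) :
    ∃ y₀ : ℝ, ∀ y : ℝ, φ y =
      -(3 * (β + c) / γ) * sech ((1 / 2) * Real.sqrt ((β + c) / α) * (y - y₀)) ^ 2 :=
  stmt_13_general α β γ c hα hγ hβc φ ψ hφ hψ hnc hφtop hφbot hψtop
end

section
/- Let E₋ and E₊ be nonempty finite sets, E := E₋ ⊔ E₊, and let α > 0 and β ∈ ℝ be fixed with α_e = α and β_e = β for all e ∈ E. For each e ∈ E let γ_e ≠ 0, y₀ₑ ∈ ℝ, and c_e ≠ 0 with β + c_e > 0 and c_e ≥ −(2/3)β. Let U : ℝ^{E₊} → ℝ^{E₋} be a linear map. Then the conditions [U((1/c_e)_{e∈E₊}) = (1/c_e)_{e∈E₋}; for all e, ẽ ∈ E: y₀ₑ/c_e = y₀_{ẽ}/c_{ẽ}, √((β+c_e)/α)·c_e = √((β+c_{ẽ})/α)·c_{ẽ}, (β+c_e)/γ_e = (β+c_{ẽ})/γ_{ẽ}; Σ_{e∈E₋}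 α/c_e² = Σ_{e∈E₊} α/c_e²; Σ_{e∈E₋} β = Σ_{e∈E₊} β] hold if and only if U((1/c_e)_{e∈E₊}) = (1/c_e)_{e∈E₋}, the card of E₋ equals the card of E₊, and the families (γ_e)_{e∈E}, (c_e)_{e∈E}, (y₀ₑ)_{e∈E} are each constant. -/
lemma key16 (α β : ℝ) (hα : 0 < α) (a b : ℝ) (ha : a ≠ 0) (hb : b ≠ 0)
    (hβa : 0 < β + a) (hβb : 0 < β + b)
    (ha2 : -(2 / 3 : ℝ) * β ≤ a) (hb2 : -(2 / 3 : ℝ) * β ≤ b)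
    (h : Real.sqrt ((β + a) / α) * a = Real.sqrt ((β + b) / α) * b) : a = b := by
  have sa : 0 < Real.sqrt ((β + a) / α) := Real.sqrt_pos.2 (div_pos hβa hα)
  have sb : 0 < Real.sqrt ((β + b) / α) := Real.sqrt_pos.2 (div_pos hβb hα)
  have hsign : (0 < a ∧ 0 < b) ∨ (a < 0 ∧ b < 0) := by
    rcases ha.lt_or_gt with ha' | ha'
    · right
      refine ⟨ha', ?_⟩
      rcases hb.lt_or_gt with hb' | hb'
      · exact hb'
      · exfalso; nlinarith [mul_neg_of_pos_of_neg sa ha', mul_pos sb hb']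
    · left
      refine ⟨ha', ?_⟩
      rcases hb.lt_or_gt with hb' | hb'
      · exfalso; nlinarith [mul_pos sa ha', mul_neg_of_pos_of_neg sb hb']
      · exact hb'
  have h2 := congrArg (· ^ 2) h
  simp only [mul_pow] at h2
  rw [Real.sq_sqrt (div_pos hβa hα).le, Real.sq_sqrt (div_pos hβb hα).le] at h2
  have hg : (β + a) * a ^ 2 = (β + b) * b ^ 2 := by
    field_simp at h2
    linarith
  rcases lt_trichotomy a b with hab | hab | hab
  · exfalso
    rcases hsign with ⟨ha', hb'⟩ | ⟨ha', hb'⟩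
    · nlinarith [mul_pos (sub_pos.2 hab) (mul_pos ha' hβa),
        mul_pos (sub_pos.2 hab) (mul_pos hb' hβb),
        mul_pos (sub_pos.2 hab) (mul_pos ha' hb')]
    · nlinarith [mul_nonneg (by linarith : (0:ℝ) ≤ 2*β + 3*a) (by linarith : (0:ℝ) ≤ -(a+b)),
        mul_pos (sub_pos.2 hab) (by nlinarith : (0:ℝ) < -(a + 2*b)),
        mul_nonneg (sub_pos.2 hab).le (mul_nonneg (by linarith : (0:ℝ) ≤ 2*β + 3*a) (by linarith : (0:ℝ) ≤ -(a+b)))]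
  · exact hab
  · exfalso
    rcases hsign with ⟨ha', hb'⟩ | ⟨ha', hb'⟩
    · nlinarith [mul_pos (sub_pos.2 hab) (mul_pos ha' hβa),
        mul_pos (sub_pos.2 hab) (mul_pos hb' hβb),
        mul_pos (sub_pos.2 hab) (mul_pos ha' hb')]
    · nlinarith [mul_nonneg (by linarith : (0:ℝ) ≤ 2*β + 3*b) (by linarith : (0:ℝ) ≤ -(a+b)),
        mul_pos (sub_pos.2 hab) (by nlinarith : (0:ℝ) < -(b + 2*a)),
        mul_nonneg (sub_pos.2 hab).le (mul_nonneg (by linarith : (0:ℝ) ≤ 2*β + 3*b) (by linarith : (0:ℝ) ≤ -(a+b)))]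

/-- On a metric star graph with constant linear coefficients `α, β` on
all edges, and speeds `c_e ≠ 0` with `β + c_e > 0` and `c_e ≥ −(2/3)β`, the full list
of solitary-wave compatibility conditions holds if and only if `U` maps the vector of
inverse speeds correctly, the graph is balanced (`|Em| = |Ep|`), and the families
`(γ_e)`, `(c_e)`, `(y₀ₑ)` are each constant. -/
theorem stmt_16 {Em Ep : Type*} [Fintype Em] [Fintype Ep] [Nonempty Em] [Nonempty Ep]
    (α β : ℝ) (hα : 0 < α)
    (γ c y₀ : Em ⊕ Ep → ℝ)
    (hγ : ∀ e, γ e ≠ 0) (hc : ∀ e, c e ≠ 0)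
    (hβc : ∀ e, 0 < β + c e) (hc23 : ∀ e, -(2 / 3 : ℝ) * β ≤ c e)
    (U : (Ep → ℝ) →ₗ[ℝ] (Em → ℝ)) :
    ( (U (fun e : Ep => 1 / c (Sum.inr e)) = fun e : Em => 1 / c (Sum.inl e)) ∧
      (∀ e e' : Em ⊕ Ep, y₀ e / c e = y₀ e' / c e') ∧
      (∀ e e' : Em ⊕ Ep,
        Real.sqrt ((β + c e) / α) * c e = Real.sqrt ((β + c e') / α) * c e') ∧
      (∀ e e' : Em ⊕ Ep, (β + c e) / γ e = (β + c e') / γ e') ∧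
      ((∑ e : Em, α / (c (Sum.inl e)) ^ 2) = ∑ e : Ep, α / (c (Sum.inr e)) ^ 2) ∧
      ((∑ _e : Em, β) = ∑ _e : Ep, β) )
    ↔
    ( (U (fun e : Ep => 1 / c (Sum.inr e)) = fun e : Em => 1 / c (Sum.inl e)) ∧
      Fintype.card Em = Fintype.card Ep ∧
      (∀ e e' : Em ⊕ Ep, γ e = γ e') ∧
      (∀ e e' : Em ⊕ Ep, c e = c e') ∧
      (∀ e e' : Em ⊕ Ep, y₀ e = y₀ e') ) := by
  constructor
  · rintro ⟨hU, hy, hsqrt, hγeq, hsum, -⟩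
    have hcc : ∀ e e' : Em ⊕ Ep, c e = c e' := fun e e' =>
      key16 α β hα (c e) (c e') (hc e) (hc e') (hβc e) (hβc e') (hc23 e) (hc23 e')
        (hsqrt e e')
    refine ⟨hU, ?_, ?_, hcc, ?_⟩
    · -- card equality from the sum condition
      obtain ⟨e₀⟩ := (inferInstance : Nonempty Em)
      set k : ℝ := α / (c (Sum.inl e₀)) ^ 2 with hk
      have hkpos : 0 < k :=
        div_pos hα ((sq_nonneg _).lt_of_ne (Ne.symm (pow_ne_zero 2 (hc _))))
      have h1 : (∑ e : Em, α / (c (Sum.inl e)) ^ 2) = Fintype.card Em * k := by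
        rw [Finset.sum_congr rfl (fun e _ => by rw [hcc (Sum.inl e) (Sum.inl e₀)]),
          Finset.sum_const, nsmul_eq_mul]
        rfl
      have h2 : (∑ e : Ep, α / (c (Sum.inr e)) ^ 2) = Fintype.card Ep * k := by
        rw [Finset.sum_congr rfl (fun e _ => by rw [hcc (Sum.inr e) (Sum.inl e₀)]),
          Finset.sum_const, nsmul_eq_mul]
        rfl
      have : (Fintype.card Em : ℝ) = Fintype.card Ep := by
        have := h1 ▸ h2 ▸ hsum
        exact mul_right_cancel₀ hkpos.ne' this
      exact_mod_cast this
    · -- γ constant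
      intro e e'
      have h := hγeq e e'
      rw [hcc e e'] at h
      rw [div_eq_div_iff (hγ e) (hγ e')] at h
      exact (mul_left_cancel₀ (hβc e').ne' h).symm
    · -- y₀ constant
      intro e e'
      have h := hy e e'
      rw [hcc e e'] at h
      rw [div_eq_div_iff (hc e') (hc e')] at h
      exact mul_right_cancel₀ (hc e') h
  · rintro ⟨hU, hcard, hγc, hcc, hyc⟩
    obtain ⟨e₀⟩ := (inferInstance : Nonempty Em)
    refine ⟨hU, fun e e' => by rw [hyc e e', hcc e e'], fun e e' => by rw [hcc e e'],
      fun e e' => by rw [hγc e e', hcc e e'], ?_, ?_⟩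
    · have h1 : (∑ e : Em, α / (c (Sum.inl e)) ^ 2)
          = Fintype.card Em • (α / (c (Sum.inl e₀)) ^ 2) := by
        rw [Finset.sum_congr rfl (fun e _ => by rw [hcc (Sum.inl e) (Sum.inl e₀)]),
          Finset.sum_const, Finset.card_univ]
      have h2 : (∑ e : Ep, α / (c (Sum.inr e)) ^ 2)
          = Fintype.card Ep • (α / (c (Sum.inl e₀)) ^ 2) := by
        rw [Finset.sum_congr rfl (fun e _ => by rw [hcc (Sum.inr e) (Sum.inl e₀)]),
          Finset.sum_const, Finset.card_univ]
      rw [h1, h2, hcard]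
    · rw [Finset.sum_const, Finset.sum_const, Finset.card_univ, Finset.card_univ, hcard]
end
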